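/- arXiv:1706.07628 — 11 statements merged into one kernel-verified Lean document; each statement's English description precedes it below -/
import Mathlib

section
/- Let I ⊆ (0, +∞) be a set satisfying the descending chain condition. Then the set ΣI := { i₁ + i₂ + ⋯ + i_k : k ∈ ℤ_{>0}, i₁, …, i_k ∈ I (repetitions allowed) } of sums of nonempty finite multisets of elements of I also satisfies the descending chain condition. -/
/-- A set `S ⊆ ℝ` satisfies the descending chain condition (DCC) if there is no
infinite strictly decreasing sequence of elements of `S`. -/
def DCC (S : Set ℝ) : Prop :=
  ¬ ∃ f : ℕ → ℝ, (∀ i, f i ∈ S) ∧ StrictAnti f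

theorem dcc_sums (I : Set ℝ) (hI : I ⊆ Set.Ioi 0) (h : DCC I) :
    DCC { x : ℝ | ∃ m : Multiset ℝ, m ≠ 0 ∧ (∀ y ∈ m, y ∈ I) ∧ x = m.sum } := by
  have hwf : I.IsWF := by
    rw [Set.isWF_iff_no_descending_seq]
    intro f hf hmem
    exact h ⟨f, fun i => hmem i, hf⟩
  have hcl : (AddSubmonoid.closure I : Set ℝ).IsPWO :=
    hwf.isPWO.addSubmonoid_closure (fun g hg => le_of_lt (hI hg))
  have hsub : { x : ℝ | ∃ m : Multiset ℝ, m ≠ 0 ∧ (∀ y ∈ m, y ∈ I) ∧ x = m.sum }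
      ⊆ (AddSubmonoid.closure I : Set ℝ) := by
    rintro x ⟨m, -, hm, rfl⟩
    exact AddSubmonoid.multiset_sum_mem _ m fun y hy =>
      AddSubmonoid.subset_closure (hm y hy)
  have := (hcl.mono hsub).isWF
  rw [Set.isWF_iff_no_descending_seq] at this
  rintro ⟨f, hfmem, hf⟩
  exact this f hf fun n => hfmem n
end

section
/- Let s ∈ ℤ_{>0}. For x, y ∈ ℝ^s write x ≤ y if xⱼ ≤ yⱼ for every coordinate j, and write 0 for the origin. Let (Pᵢ)_{i∈ℕ} be a sequence of subsets of ℝ^s such that: (i) each Pᵢ is closed; (ii) each Pᵢ is contained in the nonnegative orthant {x ∈ ℝ^s : 0 ≤ x}; (iii) each Pᵢ is downward closed, i.e., if y ∈ Pᵢ and 0 ≤ x ≤ y then x ∈ Pᵢ; (iv) Pᵢ ⊆ P_{i+1} for all i; (v) for every x ∈ ℝ^s with 0 ≤ x, the sequence of sets ({ t ∈ ℝ : t ≥ 0 and t·x ∈ Pᵢ })_{i∈ℕ} is eventually constant. Then the union ⋃_{i∈ℕ} Pᵢ is a closed subset of ℝ^s. -/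
theorem closed_union_of_stabilizing_rays (s : ℕ) (hs : 0 < s)
    (P : ℕ → Set (Fin s → ℝ))
    (hclosed : ∀ i, IsClosed (P i))
    (hnonneg : ∀ i, ∀ x ∈ P i, ∀ j, 0 ≤ x j)
    (hdown : ∀ i, ∀ y ∈ P i, ∀ x : Fin s → ℝ,
      (∀ j, 0 ≤ x j) → (∀ j, x j ≤ y j) → x ∈ P i)
    (hmono : ∀ i, P i ⊆ P (i + 1))
    (hstab : ∀ x : Fin s → ℝ, (∀ j, 0 ≤ x j) →
      ∃ N : ℕ, ∀ i, N ≤ i →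
        { t : ℝ | 0 ≤ t ∧ t • x ∈ P i } = { t : ℝ | 0 ≤ t ∧ t • x ∈ P N }) :
    IsClosed (⋃ i, P i) := by
  haveI : Nonempty (Fin s) := Fin.pos_iff_nonempty.mp hs
  have hPmono : Monotone P := monotone_nat_of_le_succ fun i => hmono i
  apply isClosed_of_closure_subset
  intro x hx
  -- x has nonnegative coordinates
  have horth : IsClosed {y : Fin s → ℝ | ∀ j, 0 ≤ y j} := by
    have h : {y : Fin s → ℝ | ∀ j, 0 ≤ y j} = ⋂ j, {y | 0 ≤ y j} := by
      ext y; simp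
    rw [h]
    exact isClosed_iInter fun j => isClosed_le continuous_const (continuous_apply j)
  have hxnn : ∀ j, 0 ≤ x j := by
    have hsub : closure (⋃ i, P i) ⊆ {y : Fin s → ℝ | ∀ j, 0 ≤ y j} := by
      apply closure_minimal _ horth
      intro y hy
      simp only [Set.mem_iUnion] at hy
      obtain ⟨i, hi⟩ := hy
      exact hnonneg i y hi
    exact hsub hx
  obtain ⟨N, hN⟩ := hstab x hxnn
  -- key: for all t ∈ [0,1), t • x ∈ P N
  have key : ∀ t : ℝ, 0 ≤ t → t < 1 → t • x ∈ P N := by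
    intro t ht ht1
    have hne : (Finset.univ : Finset (Fin s)).Nonempty := Finset.univ_nonempty
    set m := Finset.univ.inf' hne (fun j => if 0 < x j then x j else 1) with hm
    have hmpos : 0 < m := by
      rw [hm, Finset.lt_inf'_iff]
      intro j _
      by_cases h : 0 < x j <;> simp [h]
    have hmle : ∀ j, 0 < x j → m ≤ x j := by
      intro j hj
      have h := Finset.inf'_le (f := fun j => if 0 < x j then x j else 1)
        (b := j) (Finset.mem_univ j)
      rw [if_pos hj] at h
      exact h
    have hεpos : 0 < (1 - t) * m := mul_pos (by linarith) hmpos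
    obtain ⟨y, hyU, hdist⟩ := Metric.mem_closure_iff.mp hx ((1 - t) * m) hεpos
    simp only [Set.mem_iUnion] at hyU
    obtain ⟨i, hyPi⟩ := hyU
    have hcoord : ∀ j, t * x j ≤ y j := by
      intro j
      rcases (hxnn j).lt_or_eq with hpos | hzero
      · have h1 : dist (x j) (y j) ≤ dist x y := dist_le_pi_dist x y j
        have h2 : |x j - y j| < (1 - t) * m := by
          rw [← Real.dist_eq]
          exact lt_of_le_of_lt h1 hdist
        have h3 : x j - y j < (1 - t) * m := (abs_lt.mp h2).2
        have h4 : m ≤ x j := hmle j hpos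
        nlinarith
      · rw [← hzero, mul_zero]
        exact hnonneg i y hyPi j
    have htx : t • x ∈ P i := by
      apply hdown i y hyPi
      · intro j
        simp only [Pi.smul_apply, smul_eq_mul]
        exact mul_nonneg ht (hxnn j)
      · intro j
        simp only [Pi.smul_apply, smul_eq_mul]
        exact hcoord j
    have htx2 : t • x ∈ P (max i N) := hPmono (le_max_left i N) htx
    have hmem : t ∈ {u : ℝ | 0 ≤ u ∧ u • x ∈ P (max i N)} := ⟨ht, htx2⟩
    rw [hN (max i N) (le_max_right i N)] at hmem
    exact hmem.2
  -- the stabilized ray set is closed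
  have hSclosed : IsClosed {t : ℝ | 0 ≤ t ∧ t • x ∈ P N} := by
    have h : {t : ℝ | 0 ≤ t ∧ t • x ∈ P N}
        = Set.Ici (0 : ℝ) ∩ (fun t : ℝ => t • x) ⁻¹' P N := by
      ext u; simp [Set.mem_Ici]
    rw [h]
    exact isClosed_Ici.inter ((hclosed N).preimage (continuous_id.smul continuous_const))
  have hIco : Set.Ico (0 : ℝ) 1 ⊆ {t : ℝ | 0 ≤ t ∧ t • x ∈ P N} :=
    fun u hu => ⟨hu.1, key u hu.1 hu.2⟩
  have h1 : (1 : ℝ) ∈ {t : ℝ | 0 ≤ t ∧ t • x ∈ P N} := by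
    have hcl : (1 : ℝ) ∈ closure (Set.Ico (0 : ℝ) 1) := by
      rw [closure_Ico (by norm_num : (0 : ℝ) ≠ 1)]
      exact ⟨zero_le_one, le_refl 1⟩
    exact hSclosed.closure_subset ((closure_mono hIco) hcl)
  have : x ∈ P N := by
    have := h1.2
    rwa [one_smul] at this
  exact Set.mem_iUnion.mpr ⟨N, this⟩
end

section
/- With notation as in the context, every element of D(𝓕) is a linear function that is nonnegative on [a,b], the constant function 1 belongs to D(𝓕), and the set D(𝓕)₊ := ((D(𝓕))₊, [a,b]) obtained by applying the operation ₊ on [a,b] to the set D(𝓕) equals D(𝓕); that is, D(𝓕)₊ = D(𝓕). -/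
/-- A real function is linear if it has the form `t ↦ p * t + q`. -/
def IsLinearFun (f : ℝ → ℝ) : Prop := ∃ p q : ℝ, ∀ t, f t = p * t + q

/-- `(𝓕₊, [a,c])`: `{0}` together with all finite positive-integer combinations of
elements of `𝓕` that are bounded above by `1` on `[a,c]`. -/
def FPlus (F : Set (ℝ → ℝ)) (a c : ℝ) : Set (ℝ → ℝ) :=
  {0} ∪ { v | (∃ k : ℕ, 0 < k ∧ ∃ n : Fin k → ℕ, ∃ f : Fin k → ℝ → ℝ,
      (∀ i, 0 < n i) ∧ (∀ i, f i ∈ F) ∧ v = fun t => ∑ i, (n i : ℝ) * f i t) ∧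
      ∀ t ∈ Set.Icc a c, v t ≤ 1 }

/-- `D(𝓕, [a,c])`: all functions `(m - 1 + v)/m` with `m ∈ ℤ_{>0}`, `v ∈ (𝓕₊,[a,c])`,
that are bounded above by `1` on `[a,c]`. -/
def DOp (F : Set (ℝ → ℝ)) (a c : ℝ) : Set (ℝ → ℝ) :=
  { w | ∃ m : ℕ, 0 < m ∧ ∃ v ∈ FPlus F a c,
      w = (fun t => ((m : ℝ) - 1 + v t) / m) ∧ ∀ t ∈ Set.Icc a c, w t ≤ 1 }

/-- `𝒟(𝓕, [a,b]) = ⋃_{a < c ≤ b} D(𝓕, [a,c])`. -/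
def calD (F : Set (ℝ → ℝ)) (a b : ℝ) : Set (ℝ → ℝ) :=
  ⋃ c ∈ Set.Ioc a b, DOp F a c

section Aux

variable {a b : ℝ} {F : Set (ℝ → ℝ)}

lemma Fplus_nonneg (hnonneg : ∀ f ∈ F, ∀ t ∈ Set.Icc a b, 0 ≤ f t)
    {v : ℝ → ℝ} (hv : v ∈ FPlus F a b) : ∀ t ∈ Set.Icc a b, 0 ≤ v t := by
  rcases hv with h0 | ⟨⟨k, hk, n, f, hn, hf, hveq⟩, hle⟩
  · simp only [Set.mem_singleton_iff] at h0
    subst h0; intro t ht; simp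
  · subst hveq; intro t ht
    exact Finset.sum_nonneg fun i _ =>
      mul_nonneg (Nat.cast_nonneg _) (hnonneg _ (hf i) t ht)

lemma Fplus_lin (hlin : ∀ f ∈ F, IsLinearFun f)
    {v : ℝ → ℝ} (hv : v ∈ FPlus F a b) : IsLinearFun v := by
  rcases hv with h0 | ⟨⟨k, hk, n, f, hn, hf, hveq⟩, hle⟩
  · simp only [Set.mem_singleton_iff] at h0
    subst h0; exact ⟨0, 0, by simp⟩
  · subst hveq
    choose p q hpq using fun i => hlin (f i) (hf i)
    refine ⟨∑ i, (n i : ℝ) * p i, ∑ i, (n i : ℝ) * q i, fun t => ?_⟩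
    simp only [hpq, mul_add, ← mul_assoc, Finset.sum_add_distrib, Finset.sum_mul]

lemma Fplus_zero : (0 : ℝ → ℝ) ∈ FPlus F a b := Or.inl rfl

lemma Fplus_one (hone : (fun _ => (1 : ℝ)) ∈ F) :
    (fun _ => (1 : ℝ)) ∈ FPlus F a b := by
  refine Or.inr ⟨⟨1, one_pos, fun _ => 1, fun _ => (fun _ => (1:ℝ)), fun _ => one_pos,
    fun _ => hone, ?_⟩, fun t ht => by simp⟩
  funext t; simp

lemma Fplus_add {v1 v2 : ℝ → ℝ} (h1 : v1 ∈ FPlus F a b) (h2 : v2 ∈ FPlus F a b)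
    (hle : ∀ t ∈ Set.Icc a b, v1 t + v2 t ≤ 1) :
    (fun t => v1 t + v2 t) ∈ FPlus F a b := by
  rcases h1 with h0 | ⟨⟨k1, hk1, n1, f1, hn1, hf1, hv1⟩, hle1⟩
  · simp only [Set.mem_singleton_iff] at h0
    subst h0
    have : (fun t => (0 : ℝ → ℝ) t + v2 t) = v2 := by funext t; simp
    rw [this]; exact h2
  rcases h2 with h0 | ⟨⟨k2, hk2, n2, f2, hn2, hf2, hv2⟩, hle2⟩
  · simp only [Set.mem_singleton_iff] at h0
    subst h0
    have : (fun t => v1 t + (0 : ℝ → ℝ) t) = v1 := by funext t; simp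
    rw [this]; exact Or.inr ⟨⟨k1, hk1, n1, f1, hn1, hf1, hv1⟩, hle1⟩
  refine Or.inr ⟨⟨k1 + k2, by omega, Fin.addCases n1 n2, Fin.addCases f1 f2,
    ?_, ?_, ?_⟩, hle⟩
  · intro i
    refine Fin.addCases (fun i => ?_) (fun i => ?_) i <;>
      simp [Fin.addCases_left, Fin.addCases_right, hn1, hn2]
  · intro i
    refine Fin.addCases (fun i => ?_) (fun i => ?_) i <;>
      simp [Fin.addCases_left, Fin.addCases_right, hf1, hf2]
  · funext t
    rw [Fin.sum_univ_add]
    simp only [Fin.addCases_left, Fin.addCases_right]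
    rw [hv1, hv2]

lemma Fplus_smul {v : ℝ → ℝ} (hv : v ∈ FPlus F a b) (n : ℕ)
    (hle : ∀ t ∈ Set.Icc a b, (n : ℝ) * v t ≤ 1) :
    (fun t => (n : ℝ) * v t) ∈ FPlus F a b := by
  rcases Nat.eq_zero_or_pos n with hn0 | hn0
  · subst hn0
    have : (fun t => ((0:ℕ) : ℝ) * v t) = (0 : ℝ → ℝ) := by funext t; simp
    rw [this]; exact Fplus_zero
  rcases hv with h0 | ⟨⟨k, hk, m, f, hm, hf, hveq⟩, _⟩
  · simp only [Set.mem_singleton_iff] at h0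
    subst h0
    have : (fun t => (n : ℝ) * (0 : ℝ → ℝ) t) = (0 : ℝ → ℝ) := by funext t; simp
    rw [this]; exact Fplus_zero
  refine Or.inr ⟨⟨k, hk, fun i => n * m i, f, fun i => Nat.mul_pos hn0 (hm i), hf, ?_⟩, hle⟩
  subst hveq
  funext t
  rw [Finset.mul_sum]
  congr 1; funext i; push_cast; ring

lemma Fplus_const01 (hone : (fun _ => (1 : ℝ)) ∈ F) (c : ℕ) (hc : c ≤ 1) :
    (fun _ => (c : ℝ)) ∈ FPlus F a b := by
  interval_cases c
  · have : (fun _ : ℝ => ((0:ℕ) : ℝ)) = (0 : ℝ → ℝ) := by funext t; simp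
    rw [this]; exact Fplus_zero
  · have : (fun _ : ℝ => ((1:ℕ) : ℝ)) = (fun _ => (1:ℝ)) := by funext t; simp
    rw [this]; exact Fplus_one hone

lemma DOp_nonneg (hnonneg : ∀ f ∈ F, ∀ t ∈ Set.Icc a b, 0 ≤ f t)
    {w : ℝ → ℝ} (hw : w ∈ DOp F a b) : ∀ t ∈ Set.Icc a b, 0 ≤ w t := by
  obtain ⟨m, hm, v, hv, hweq, _⟩ := hw
  subst hweq
  intro t ht
  have h1 : (1 : ℝ) ≤ m := by exact_mod_cast hm
  have h2 : 0 ≤ v t := Fplus_nonneg hnonneg hv t ht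
  show ((m : ℝ) - 1 + v t) / m ≥ 0
  apply div_nonneg <;> linarith

lemma DOp_lin (hlin : ∀ f ∈ F, IsLinearFun f)
    {w : ℝ → ℝ} (hw : w ∈ DOp F a b) : IsLinearFun w := by
  obtain ⟨m, hm, v, hv, hweq, _⟩ := hw
  subst hweq
  obtain ⟨p, q, hpq⟩ := Fplus_lin hlin hv
  refine ⟨p / m, ((m : ℝ) - 1 + q) / m, fun t => ?_⟩
  show ((m : ℝ) - 1 + v t) / m = _
  rw [hpq]; ring

lemma DOp_zero : (0 : ℝ → ℝ) ∈ DOp F a b := by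
  refine ⟨1, one_pos, 0, Fplus_zero, ?_, fun t ht => by simp⟩
  funext t; simp

lemma DOp_one (hone : (fun _ => (1 : ℝ)) ∈ F) :
    (fun _ => (1 : ℝ)) ∈ DOp F a b := by
  refine ⟨1, one_pos, fun _ => (1:ℝ), Fplus_one hone, ?_, fun t ht => le_refl _⟩
  funext t; norm_num

lemma DOp_le_one {w : ℝ → ℝ} (hw : w ∈ DOp F a b) : ∀ t ∈ Set.Icc a b, w t ≤ 1 := by
  obtain ⟨m, hm, v, hv, hweq, hle⟩ := hw
  exact hle

lemma DOp_add (hab : a ≤ b) (hnonneg : ∀ f ∈ F, ∀ t ∈ Set.Icc a b, 0 ≤ f t)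
    (hone : (fun _ => (1 : ℝ)) ∈ F)
    {w1 w2 : ℝ → ℝ} (h1 : w1 ∈ DOp F a b) (h2 : w2 ∈ DOp F a b)
    (hle : ∀ t ∈ Set.Icc a b, w1 t + w2 t ≤ 1) :
    (fun t => w1 t + w2 t) ∈ DOp F a b := by
  obtain ⟨m1, hm1, v1, hv1, hw1, hle1⟩ := h1
  obtain ⟨m2, hm2, v2, hv2, hw2, hle2⟩ := h2
  have hm1R : (1 : ℝ) ≤ m1 := by exact_mod_cast hm1
  have hm2R : (1 : ℝ) ≤ m2 := by exact_mod_cast hm2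
  have hv1n := Fplus_nonneg hnonneg hv1
  have hv2n := Fplus_nonneg hnonneg hv2
  set c : ℕ := (m1 - 1) * (m2 - 1) with hc
  have hcR : ((c : ℕ) : ℝ) = ((m1:ℝ) - 1) * ((m2:ℝ) - 1) := by
    rw [hc]; push_cast [Nat.cast_sub hm1, Nat.cast_sub hm2]; ring
  -- key pointwise identity
  have key : ∀ t, w1 t + w2 t =
      ((m1 * m2 : ℕ) - 1 + ((c : ℝ) + ((m2 : ℝ) * v1 t + (m1 : ℝ) * v2 t))) / (m1 * m2 : ℕ) := by
    intro t
    rw [hw1, hw2, hcR]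
    push_cast
    field_simp
    ring
  -- bound on V
  have hVle : ∀ t ∈ Set.Icc a b, (c : ℝ) + ((m2 : ℝ) * v1 t + (m1 : ℝ) * v2 t) ≤ 1 := by
    intro t ht
    have h := hle t ht
    rw [key t] at h
    have hM : (0 : ℝ) < ((m1 * m2 : ℕ) : ℝ) := by positivity
    rw [div_le_one hM] at h
    linarith
  have hV1le : ∀ t ∈ Set.Icc a b, (m2 : ℝ) * v1 t ≤ 1 := by
    intro t ht
    have := hVle t ht
    have h1 := hv2n t ht
    have hc0 : (0:ℝ) ≤ (c:ℝ) := Nat.cast_nonneg _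
    nlinarith
  have hV2le : ∀ t ∈ Set.Icc a b, (m1 : ℝ) * v2 t ≤ 1 := by
    intro t ht
    have := hVle t ht
    have h1 := hv1n t ht
    have hc0 : (0:ℝ) ≤ (c:ℝ) := Nat.cast_nonneg _
    nlinarith
  have hA := Fplus_smul hv1 m2 hV1le
  have hB := Fplus_smul hv2 m1 hV2le
  have hAB : (fun t => (m2 : ℝ) * v1 t + (m1 : ℝ) * v2 t) ∈ FPlus F a b := by
    refine Fplus_add hA hB ?_
    intro t ht
    have := hVle t ht
    have hc0 : (0:ℝ) ≤ (c:ℝ) := Nat.cast_nonneg _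
    linarith
  have hcle : c ≤ 1 := by
    have ha : a ∈ Set.Icc a b := ⟨le_refl _, hab⟩
    have := hVle a ha
    have h1 : (0:ℝ) ≤ (m2 : ℝ) * v1 a := by
      have := hv1n a ha; positivity
    have h2 : (0:ℝ) ≤ (m1 : ℝ) * v2 a := by
      have := hv2n a ha; positivity
    have : (c : ℝ) ≤ 1 := by linarith
    exact_mod_cast this
  have hC := Fplus_const01 (a := a) (b := b) hone c hcle
  have hV : (fun t => (c : ℝ) + ((m2 : ℝ) * v1 t + (m1 : ℝ) * v2 t)) ∈ FPlus F a b := by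
    refine Fplus_add hC hAB ?_
    exact hVle
  exact ⟨m1 * m2, Nat.mul_pos hm1 hm2, _, hV, funext key, hle⟩

lemma DOp_smul (hab : a ≤ b) (hnonneg : ∀ f ∈ F, ∀ t ∈ Set.Icc a b, 0 ≤ f t)
    (hone : (fun _ => (1 : ℝ)) ∈ F)
    {w : ℝ → ℝ} (hw : w ∈ DOp F a b) (n : ℕ) (hn : 0 < n)
    (hle : ∀ t ∈ Set.Icc a b, (n : ℝ) * w t ≤ 1) :
    (fun t => (n : ℝ) * w t) ∈ DOp F a b := by
  obtain ⟨m, hm, v, hv, hweq, hwle⟩ := hw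
  have hmR : (1 : ℝ) ≤ m := by exact_mod_cast hm
  have hnR : (1 : ℝ) ≤ n := by exact_mod_cast hn
  have hvn := Fplus_nonneg hnonneg hv
  set c : ℕ := (n - 1) * (m - 1) with hc
  have hcR : ((c : ℕ) : ℝ) = ((n:ℝ) - 1) * ((m:ℝ) - 1) := by
    rw [hc]; push_cast [Nat.cast_sub hn, Nat.cast_sub hm]; ring
  have key : ∀ t, (n : ℝ) * w t = ((m : ℝ) - 1 + ((c : ℝ) + (n : ℝ) * v t)) / m := by
    intro t
    rw [hweq, hcR]
    field_simp
    ring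
  have hVle : ∀ t ∈ Set.Icc a b, (c : ℝ) + (n : ℝ) * v t ≤ 1 := by
    intro t ht
    have h := hle t ht
    rw [key t] at h
    have hM : (0 : ℝ) < (m : ℝ) := by positivity
    rw [div_le_one hM] at h
    linarith
  have hnvle : ∀ t ∈ Set.Icc a b, (n : ℝ) * v t ≤ 1 := by
    intro t ht
    have := hVle t ht
    have hc0 : (0:ℝ) ≤ (c:ℝ) := Nat.cast_nonneg _
    linarith
  have hnv := Fplus_smul hv n hnvle
  have hcle : c ≤ 1 := by
    have ha : a ∈ Set.Icc a b := ⟨le_refl _, hab⟩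
    have := hVle a ha
    have h1 : (0:ℝ) ≤ (n : ℝ) * v a := by
      have := hvn a ha; positivity
    have : (c : ℝ) ≤ 1 := by linarith
    exact_mod_cast this
  have hV : (fun t => (c : ℝ) + (n : ℝ) * v t) ∈ FPlus F a b :=
    Fplus_add (Fplus_const01 (a := a) (b := b) hone c hcle) hnv hVle
  exact ⟨m, hm, _, hV, funext key, hle⟩

lemma DOp_sum (hab : a ≤ b) (hnonneg : ∀ f ∈ F, ∀ t ∈ Set.Icc a b, 0 ≤ f t)
    (hone : (fun _ => (1 : ℝ)) ∈ F) (k : ℕ) :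
    ∀ (n : Fin k → ℕ) (f : Fin k → ℝ → ℝ),
    (∀ i, 0 < n i) → (∀ i, f i ∈ DOp F a b) →
    (∀ t ∈ Set.Icc a b, (∑ i, (n i : ℝ) * f i t) ≤ 1) →
    (fun t => ∑ i, (n i : ℝ) * f i t) ∈ DOp F a b := by
  induction k with
  | zero =>
    intro n f _ _ _
    have : (fun t : ℝ => ∑ i : Fin 0, (n i : ℝ) * f i t) = (0 : ℝ → ℝ) := by
      funext t; simp
    rw [this]; exact DOp_zero
  | succ k ih =>
    intro n f hn hf hle
    have hterm : ∀ i, ∀ t ∈ Set.Icc a b, 0 ≤ (n i : ℝ) * f i t := by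
      intro i t ht
      exact mul_nonneg (Nat.cast_nonneg _) (DOp_nonneg hnonneg (hf i) t ht)
    have hsplit : ∀ t, (∑ i : Fin (k+1), (n i : ℝ) * f i t) =
        (n 0 : ℝ) * f 0 t + ∑ i : Fin k, (n i.succ : ℝ) * f i.succ t := by
      intro t; rw [Fin.sum_univ_succ]
    have hrest_le : ∀ t ∈ Set.Icc a b, (∑ i : Fin k, (n i.succ : ℝ) * f i.succ t) ≤ 1 := by
      intro t ht
      have h := hle t ht
      rw [hsplit t] at h
      have := hterm 0 t ht
      linarith
    have h0le : ∀ t ∈ Set.Icc a b, (n 0 : ℝ) * f 0 t ≤ 1 := by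
      intro t ht
      have h := hle t ht
      rw [hsplit t] at h
      have : (0:ℝ) ≤ ∑ i : Fin k, (n i.succ : ℝ) * f i.succ t :=
        Finset.sum_nonneg fun i _ => hterm i.succ t ht
      linarith
    have h0 := DOp_smul hab hnonneg hone (hf 0) (n 0) (hn 0) h0le
    have hrest := ih (fun i => n i.succ) (fun i => f i.succ)
      (fun i => hn i.succ) (fun i => hf i.succ) hrest_le
    have := DOp_add hab hnonneg hone h0 hrest
      (by intro t ht; rw [← hsplit t]; exact hle t ht)
    have heq : (fun t => (n 0 : ℝ) * f 0 t + ∑ i : Fin k, (n i.succ : ℝ) * f i.succ t) =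
        (fun t => ∑ i : Fin (k+1), (n i : ℝ) * f i t) := by
      funext t; rw [hsplit t]
    rw [heq] at this
    exact this

end Aux

theorem DOp_idem (a b : ℝ) (hab : a < b) (F : Set (ℝ → ℝ))
    (hlin : ∀ f ∈ F, IsLinearFun f)
    (hnonneg : ∀ f ∈ F, ∀ t ∈ Set.Icc a b, 0 ≤ f t)
    (hone : (fun _ => (1 : ℝ)) ∈ F) :
    (∀ w ∈ DOp F a b, IsLinearFun w ∧ ∀ t ∈ Set.Icc a b, 0 ≤ w t) ∧
    (fun _ => (1 : ℝ)) ∈ DOp F a b ∧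
    FPlus (DOp F a b) a b = DOp F a b := by
  refine ⟨fun w hw => ⟨DOp_lin hlin hw, DOp_nonneg hnonneg hw⟩, DOp_one hone, ?_⟩
  apply Set.eq_of_subset_of_subset
  · rintro v (h0 | ⟨⟨k, hk, n, f, hn, hf, hveq⟩, hle⟩)
    · simp only [Set.mem_singleton_iff] at h0
      subst h0; exact DOp_zero
    · subst hveq
      exact DOp_sum hab.le hnonneg hone k n f hn hf hle
  · intro w hw
    have hwle := DOp_le_one hw
    refine Or.inr ⟨⟨1, one_pos, fun _ => 1, fun _ => w, fun _ => one_pos,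
      fun _ => hw, ?_⟩, hwle⟩
    funext t; simp
end

section
/- With notation as in the context, every element of 𝒟(𝓕, [a,b]) is a linear function that is nonnegative on [a,b], the constant function 1 belongs to 𝒟(𝓕, [a,b]), and applying the operator 𝒟 on [a,b] to the set 𝒟(𝓕, [a,b]) returns the same set; that is, 𝒟(𝒟(𝓕, [a,b]), [a,b]) = 𝒟(𝓕, [a,b]). -/
/-!
Write `N_m v` for `dilute m v = (m - 1 + v)/m`. As `N_m v ≤ 1` exactly where `v ≤ 1`,
`D(𝓕,[a,c])` consists of the members of
`dilutions 𝓕 = {N_m v | m > 0, v a positive-integer combination of 𝓕}` that are `≤ 1` on `[a,c]`,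
and `dilutions 𝓕` does not depend on the interval. Since `1 ∈ 𝓕`, it is closed under addition,
`N_m v + N_n u = N_{mn}((m-1)(n-1) + n v + m u)`, and `N_m (N_n u) = N_{mn} u`. Hence
`dilutions 𝒟(𝓕,[a,b]) ⊆ dilutions 𝓕`, so an element of `𝒟(𝒟(𝓕,[a,b]),[a,b])` that is `≤ 1` on
`[a,c]` already lies in `D(𝓕,[a,c])`.
-/

section Dilute

variable {X : Type*}

noncomputable def dilute (m : ℕ) (v : X → ℝ) : X → ℝ := fun t => ((m : ℝ) - 1 + v t) / m

lemma dilute_one_left (v : X → ℝ) : dilute 1 v = v := by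
  ext t; simp [dilute]

lemma dilute_le_one_iff {m : ℕ} (hm : 0 < m) {v : X → ℝ} {t : X} :
    dilute m v t ≤ 1 ↔ v t ≤ 1 := by
  have hm' : (0 : ℝ) < m := by exact_mod_cast hm
  rw [dilute, div_le_one hm']
  constructor <;> intro h <;> linarith

lemma dilute_nonneg {m : ℕ} (hm : 0 < m) {v : X → ℝ} {t : X} (hv : 0 ≤ v t) :
    0 ≤ dilute m v t := by
  have hm' : (1 : ℝ) ≤ m := by exact_mod_cast hm
  exact div_nonneg (by linarith) (by linarith)

lemma dilute_dilute {m n : ℕ} (hm : 0 < m) (hn : 0 < n) (u : X → ℝ) :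
    dilute m (dilute n u) = dilute (m * n) u := by
  have hm' : (m : ℝ) ≠ 0 := by positivity
  have hn' : (n : ℝ) ≠ 0 := by positivity
  ext t
  simp only [dilute, Nat.cast_mul]
  field_simp
  ring

lemma dilute_add_dilute {m n : ℕ} (hm : 0 < m) (hn : 0 < n) (v u : X → ℝ) :
    dilute m v + dilute n u =
      dilute (m * n) (((m - 1) * (n - 1)) • (1 : X → ℝ) + n • v + m • u) := by
  have hm' : (m : ℝ) ≠ 0 := by positivity
  have hn' : (n : ℝ) ≠ 0 := by positivity
  ext t
  simp only [dilute, Pi.add_apply, nsmul_eq_mul, Pi.mul_apply, Pi.natCast_apply, Pi.one_apply]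
  push_cast [Nat.cast_sub hm, Nat.cast_sub hn]
  field_simp
  ring

lemma IsLinearFun.dilute {v : ℝ → ℝ} (hv : IsLinearFun v) (m : ℕ) :
    IsLinearFun (dilute m v) := by
  obtain ⟨p, q, hpq⟩ := hv
  exact ⟨p / m, ((m : ℝ) - 1 + q) / m, fun t => by simp only [_root_.dilute, hpq]; ring⟩

end Dilute

section Dilutions

variable {X : Type*} {F S : Set (X → ℝ)}

def dilutions (F : Set (X → ℝ)) : Set (X → ℝ) :=
  {w | ∃ m : ℕ, 0 < m ∧ ∃ v ∈ AddSubmonoid.closure F, w = dilute m v}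

lemma subset_dilutions : (AddSubmonoid.closure F : Set (X → ℝ)) ⊆ dilutions F :=
  fun v hv => ⟨1, one_pos, v, hv, (dilute_one_left v).symm⟩

lemma add_mem_dilutions (hone : (fun _ => (1 : ℝ)) ∈ F) {w₁ w₂ : X → ℝ}
    (h₁ : w₁ ∈ dilutions F) (h₂ : w₂ ∈ dilutions F) :
    w₁ + w₂ ∈ dilutions F := by
  obtain ⟨m, hm, v, hv, rfl⟩ := h₁
  obtain ⟨n, hn, u, hu, rfl⟩ := h₂
  refine ⟨m * n, Nat.mul_pos hm hn, _, ?_, dilute_add_dilute hm hn v u⟩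
  exact add_mem (add_mem (nsmul_mem (AddSubmonoid.subset_closure hone) _) (nsmul_mem hv _))
    (nsmul_mem hu _)

lemma closure_subset_dilutions (hone : (fun _ => (1 : ℝ)) ∈ F)
    (hS : S ⊆ dilutions F) : (AddSubmonoid.closure S : Set (X → ℝ)) ⊆ dilutions F := by
  intro v hv
  induction hv using AddSubmonoid.closure_induction with
  | mem w hw => exact hS hw
  | zero => exact subset_dilutions (zero_mem _)
  | add _ _ _ _ h₁ h₂ => exact add_mem_dilutions hone h₁ h₂

lemma dilutions_subset (hone : (fun _ => (1 : ℝ)) ∈ F) (hS : S ⊆ dilutions F) :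
    dilutions S ⊆ dilutions F := by
  rintro _ ⟨m, hm, v, hv, rfl⟩
  obtain ⟨n, hn, u, hu, rfl⟩ := closure_subset_dilutions hone hS hv
  exact ⟨m * n, Nat.mul_pos hm hn, u, hu, dilute_dilute hm hn u⟩

end Dilutions

lemma isLinearFun_of_mem_closure {F : Set (ℝ → ℝ)} (hlin : ∀ f ∈ F, IsLinearFun f)
    {v : ℝ → ℝ} (hv : v ∈ AddSubmonoid.closure F) : IsLinearFun v := by
  induction hv using AddSubmonoid.closure_induction with
  | mem f hf => exact hlin f hf
  | zero => exact ⟨0, 0, fun t => by simp⟩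
  | add _ _ _ _ h₁ h₂ =>
    obtain ⟨p, q, hpq⟩ := h₁
    obtain ⟨p', q', hpq'⟩ := h₂
    exact ⟨p + p', q + q', fun t => by simp only [Pi.add_apply, hpq, hpq']; ring⟩

lemma nonneg_of_mem_closure {X : Type*} {F : Set (X → ℝ)} {s : Set X}
    (hnonneg : ∀ f ∈ F, ∀ t ∈ s, 0 ≤ f t) {v : X → ℝ}
    (hv : v ∈ AddSubmonoid.closure F) : ∀ t ∈ s, 0 ≤ v t := by
  induction hv using AddSubmonoid.closure_induction with
  | mem f hf => exact hnonneg f hf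
  | zero => exact fun _ _ => le_rfl
  | add _ _ _ _ h₁ h₂ => exact fun t ht => add_nonneg (h₁ t ht) (h₂ t ht)

section Membership

variable {F : Set (ℝ → ℝ)} {a b c : ℝ} {w : ℝ → ℝ}

lemma mem_FPlus_iff {v : ℝ → ℝ} :
    v ∈ FPlus F a c ↔ v ∈ AddSubmonoid.closure F ∧ ∀ t ∈ Set.Icc a c, v t ≤ 1 := by
  constructor
  · rintro (rfl | ⟨⟨k, -, n, f, -, hf, rfl⟩, hb⟩)
    · exact ⟨zero_mem _, fun t _ => by simp⟩
    · refine ⟨?_, hb⟩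
      have hsum : (fun t => ∑ i, (n i : ℝ) * f i t) = ∑ i, n i • f i := by
        ext t; simp [Finset.sum_apply, nsmul_eq_mul]
      rw [hsum]
      exact sum_mem fun i _ => nsmul_mem (AddSubmonoid.subset_closure (hf i)) _
  · rintro ⟨hv, hb⟩
    obtain ⟨l, hl, rfl⟩ := AddSubmonoid.exists_list_of_mem_closure hv
    rcases l with _ | ⟨g, l⟩
    · exact Or.inl rfl
    · refine Or.inr ⟨⟨(g :: l).length, by simp, fun _ => 1, fun i => (g :: l)[i],
        fun _ => one_pos, fun i => hl _ (List.getElem_mem _), ?_⟩, hb⟩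
      ext t
      rw [← Fin.sum_univ_getElem, Finset.sum_apply]
      simp

lemma mem_DOp_iff : w ∈ DOp F a c ↔ w ∈ dilutions F ∧ ∀ t ∈ Set.Icc a c, w t ≤ 1 := by
  constructor
  · rintro ⟨m, hm, v, hv, rfl, hb⟩
    exact ⟨⟨m, hm, v, (mem_FPlus_iff.1 hv).1, rfl⟩, hb⟩
  · rintro ⟨⟨m, hm, v, hv, rfl⟩, hb⟩
    exact ⟨m, hm, v, mem_FPlus_iff.2 ⟨hv, fun t ht => (dilute_le_one_iff hm).1 (hb t ht)⟩,
      rfl, hb⟩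

lemma mem_calD_iff : w ∈ calD F a b ↔
    ∃ c ∈ Set.Ioc a b, w ∈ dilutions F ∧ ∀ t ∈ Set.Icc a c, w t ≤ 1 := by
  simp only [calD, Set.mem_iUnion₂, mem_DOp_iff, exists_prop]

lemma calD_subset_dilutions : calD F a b ⊆ dilutions F :=
  fun _ hw => by
    obtain ⟨_, _, hwD, _⟩ := mem_calD_iff.1 hw
    exact hwD

end Membership

theorem calD_idem (a b : ℝ) (hab : a < b) (F : Set (ℝ → ℝ))
    (hlin : ∀ f ∈ F, IsLinearFun f)
    (hnonneg : ∀ f ∈ F, ∀ t ∈ Set.Icc a b, 0 ≤ f t)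
    (hone : (fun _ => (1 : ℝ)) ∈ F) :
    (∀ w ∈ calD F a b, IsLinearFun w ∧ ∀ t ∈ Set.Icc a b, 0 ≤ w t) ∧
    (fun _ => (1 : ℝ)) ∈ calD F a b ∧
    calD (calD F a b) a b = calD F a b := by
  refine ⟨fun w hw => ?_, ?_, ?_⟩
  · obtain ⟨m, hm, v, hv, rfl⟩ := calD_subset_dilutions hw
    exact ⟨(isLinearFun_of_mem_closure hlin hv).dilute m,
      fun t ht => dilute_nonneg hm (nonneg_of_mem_closure hnonneg hv t ht)⟩
  · exact mem_calD_iff.2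
      ⟨b, ⟨hab, le_rfl⟩, subset_dilutions (AddSubmonoid.subset_closure hone), fun _ _ => le_rfl⟩
  · refine Set.Subset.antisymm (fun w hw => ?_) (fun w hw => ?_)
    · obtain ⟨c, hc, hwD, hb⟩ := mem_calD_iff.1 hw
      exact mem_calD_iff.2 ⟨c, hc, dilutions_subset hone calD_subset_dilutions hwD, hb⟩
    · obtain ⟨c, hc, -, hb⟩ := mem_calD_iff.1 hw
      exact mem_calD_iff.2 ⟨c, hc, subset_dilutions (AddSubmonoid.subset_closure hw), hb⟩
end

section
/- Let s ∈ ℤ_{>0}. Let (Tᵢ)_{i∈ℕ} be a sequence of subsets of ℝ^s with T_{i+1} ⊆ Tᵢ for all i, such that each Tᵢ is the convex hull of a finite subset of ℝ^s and has nonempty interior. Let T be a nonempty closed convex subset of ⋂_{i∈ℕ} Tᵢ with empty interior. Then there exist a point α ∈ T and a vector e ∈ ℝ^s such that for every i there exists λ ≥ 0 with α + λ·e ∈ Tᵢ and α + λ·e ∉ T. -/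
/-!
Take `α` in the relative interior of `S` and a complement `M` of the direction `L` of its affine
span. The cone generated by `T i - α` contains `L`, because `α` is relatively interior, and it
meets `M` in a unit vector, because `T i` is full-dimensional while `S` is not. These cones are
closed, being finitely generated (conic Carathéodory), and decrease with `i`, so by Cantor's
intersection theorem one unit vector `e ∈ M` lies in all of them. Then `α + λ • e ∈ T i` for some
`λ > 0`, and `α + λ • e ∉ S` since `e ∉ L`.
-/

open PointedCone Topology Pointwise

section FinitelyGeneratedCone

variable {E : Type*} [AddCommGroup E] [Module ℝ E]

theorem PointedCone.mem_hull_finset_iff {s : Finset E} {x : E} :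
    x ∈ hull ℝ (s : Set E) ↔ ∃ c : E → ℝ, (∀ y ∈ s, 0 ≤ c y) ∧ ∑ y ∈ s, c y • y = x := by
  constructor
  · rw [mem_hull_set]
    rintro ⟨c, hcs, hc0, rfl⟩
    exact ⟨c, fun y _ => hc0 y,
      (c.sum_of_support_subset hcs (fun m r => r • m) fun y _ => zero_smul ℝ y).symm⟩
  · rintro ⟨c, hc0, rfl⟩
    exact Submodule.sum_mem _ fun y hy => smul_mem _ (hc0 y hy) (subset_hull hy)

theorem PointedCone.hull_convexHull (s : Set E) : hull ℝ (convexHull ℝ s) = hull ℝ s :=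
  le_antisymm (Submodule.span_le.mpr (convexHull_min subset_hull (hull ℝ s).convex))
    (Submodule.span_mono (subset_convexHull ℝ s))

/-- Conic Carathéodory step: a linear relation among the generators with a positive coefficient
can be subtracted from any conic combination until one coefficient vanishes. -/
theorem PointedCone.exists_mem_hull_erase_of_not_linearIndepOn [DecidableEq E] {s : Finset E}
    {x : E} (hs : ¬LinearIndepOn ℝ id (s : Set E)) (hx : x ∈ hull ℝ (s : Set E)) :
    ∃ g ∈ s, x ∈ hull ℝ (s.erase g : Set E) := by
  obtain ⟨c, hc0, rfl⟩ := mem_hull_finset_iff.mp hx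
  obtain ⟨f, hf, hfpos⟩ : ∃ f : E → ℝ, ∑ y ∈ s, f y • y = 0 ∧ ∃ y ∈ s, 0 < f y := by
    obtain ⟨f, hf, y, hy, hfy⟩ := not_linearIndepOn_finset_iff.mp hs
    rcases hfy.lt_or_gt with h | h
    · exact ⟨-f, by simpa using hf, y, hy, by simpa using h⟩
    · exact ⟨f, hf, y, hy, h⟩
  obtain ⟨g, hg, hmin⟩ := (s.filter (0 < f ·)).exists_min_image (fun y => c y / f y)
    (by simpa [Finset.filter_nonempty_iff] using hfpos)
  rw [Finset.mem_filter] at hg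
  set r := c g / f g
  have hr : 0 ≤ r := div_nonneg (hc0 g hg.1) hg.2.le
  refine ⟨g, hg.1, mem_hull_finset_iff.mpr ⟨fun y => c y - r * f y, fun y hy => ?_, ?_⟩⟩
  · have hy := Finset.mem_of_mem_erase hy
    rcases le_or_gt (f y) 0 with h | h
    · nlinarith [hc0 y hy]
    · have := hmin y (Finset.mem_filter.mpr ⟨hy, h⟩)
      rw [le_div_iff₀ h] at this
      linarith
  · rw [Finset.sum_erase _ (by simp [r, div_mul_cancel₀ _ hg.2.ne'])]
    simp only [sub_smul, Finset.sum_sub_distrib, mul_smul, ← Finset.smul_sum, hf, smul_zero,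
      sub_zero]

variable [TopologicalSpace E] [IsTopologicalAddGroup E] [ContinuousSMul ℝ E] [T2Space E]

theorem PointedCone.isClosed_hull_of_linearIndepOn {s : Finset E}
    (hs : LinearIndepOn ℝ id (s : Set E)) : IsClosed (hull ℝ (s : Set E) : Set E) := by
  let φ := Fintype.linearCombination ℝ (fun y : s => (y : E))
  have hφ : LinearMap.ker φ = ⊥ :=
    LinearMap.ker_eq_bot.mpr hs.fintypeLinearCombination_injective
  have himage : (hull ℝ (s : Set E) : Set E) = φ '' Set.Ici 0 := by
    ext x
    constructor
    · intro hx
      obtain ⟨c, hc0, rfl⟩ := mem_hull_finset_iff.mp hx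
      exact ⟨fun y => c y, fun y => hc0 y y.2, by
        simpa [φ, Fintype.linearCombination_apply] using s.sum_attach (fun y => c y • y)⟩
    · rintro ⟨c, hc0, rfl⟩
      exact Submodule.sum_mem _ fun y _ => smul_mem _ (hc0 y) (subset_hull y.2)
  rw [himage]
  exact (LinearMap.isClosedEmbedding_of_injective hφ).isClosedMap _ isClosed_Ici

theorem PointedCone.isClosed_hull_finset (s : Finset E) :
    IsClosed (hull ℝ (s : Set E) : Set E) := by
  classical
  induction s using Finset.strongInduction with
  | H s ih =>
    by_cases hs : LinearIndepOn ℝ id (s : Set E)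
    · exact isClosed_hull_of_linearIndepOn hs
    · have hunion : (hull ℝ (s : Set E) : Set E) =
          ⋃ g ∈ s, (hull ℝ (s.erase g : Set E) : Set E) := by
        ext x
        simp only [Set.mem_iUnion, SetLike.mem_coe, exists_prop]
        refine ⟨exists_mem_hull_erase_of_not_linearIndepOn hs, ?_⟩
        rintro ⟨g, -, hx⟩
        exact Submodule.span_mono (Finset.coe_subset.mpr (s.erase_subset g)) hx
      rw [hunion]
      exact isClosed_biUnion_finset fun g hg => ih _ (Finset.erase_ssubset hg)

theorem PointedCone.isClosed_hull_vadd_convexHull (α : E) (V : Finset E) :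
    IsClosed (hull ℝ (α +ᵥ convexHull ℝ (V : Set E)) : Set E) := by
  classical
  rw [← convexHull_vadd, hull_convexHull, ← Set.image_vadd, ← Finset.coe_image]
  exact isClosed_hull_finset _

end FinitelyGeneratedCone

section ConeOfFeasibleDirections

variable {E : Type*} [AddCommGroup E] [Module ℝ E]

theorem Convex.exists_pos_add_smul_mem_of_mem_hull {P : Set E} (hP : Convex ℝ P) {α d : E}
    (hα : α ∈ P) (hd : d ∈ hull ℝ (-α +ᵥ P)) : ∃ c : ℝ, 0 < c ∧ α + c • d ∈ P := by
  let C := ConvexCone.hull ℝ (-α +ᵥ P)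
  have hC : C.Pointed := ConvexCone.subset_hull ⟨α, hα, neg_add_cancel α⟩
  have hdC : d ∈ C.toPointedCone hC := Submodule.span_le.mpr ConvexCone.subset_hull hd
  obtain ⟨r, hr, y, hy, rfl⟩ := (ConvexCone.mem_hull_of_convex (hP.vadd (-α))).mp hdC
  refine ⟨r⁻¹, inv_pos.mpr hr, ?_⟩
  simpa [smul_smul, inv_mul_cancel₀ hr.ne', Set.mem_vadd_set_iff_neg_vadd_mem] using hy

variable [TopologicalSpace E] [IsTopologicalAddGroup E] [ContinuousSMul ℝ E]

theorem exists_pos_add_smul_mem_of_mem_intrinsicInterior {S : Set E} {α v : E}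
    (hα : α ∈ intrinsicInterior ℝ S) (hv : v ∈ (affineSpan ℝ S).direction) :
    ∃ ε : ℝ, 0 < ε ∧ α + ε • v ∈ S := by
  obtain ⟨y, hy, rfl⟩ := mem_intrinsicInterior.mp hα
  let γ : ℝ → affineSpan ℝ S := fun ε =>
    ⟨ε • v +ᵥ (y : E), AffineSubspace.vadd_mem_of_mem_direction (Submodule.smul_mem _ ε hv) y.2⟩
  have hγ : Continuous γ := by fun_prop
  have hγ0 : γ 0 = y := by simp [γ]
  have hnear : ∀ᶠ ε in 𝓝 (0 : ℝ), γ ε ∈ Subtype.val ⁻¹' S :=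
    hγ.continuousAt.preimage_mem_nhds (hγ0 ▸ mem_interior_iff_mem_nhds.mp hy)
  obtain ⟨ε, hεS, hε⟩ := ((hnear.filter_mono nhdsWithin_le_nhds).and
    (self_mem_nhdsWithin : ∀ᶠ ε in 𝓝[>] (0 : ℝ), 0 < ε)).exists
  exact ⟨ε, hε, by simpa [γ, add_comm] using hεS⟩

theorem mem_hull_vadd_of_mem_direction {S : Set E} {α v : E}
    (hα : α ∈ intrinsicInterior ℝ S) (hv : v ∈ (affineSpan ℝ S).direction) :
    v ∈ hull ℝ (-α +ᵥ S) := by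
  obtain ⟨ε, hε, hεS⟩ := exists_pos_add_smul_mem_of_mem_intrinsicInterior hα hv
  have hεv : ε • v ∈ hull ℝ (-α +ᵥ S) :=
    subset_hull (Set.mem_vadd_set_iff_neg_vadd_mem.mpr (by simpa using hεS))
  simpa [smul_smul, inv_mul_cancel₀ hε.ne'] using smul_mem _ (inv_nonneg.mpr hε.le) hεv

end ConeOfFeasibleDirections

theorem add_smul_notMem_of_isCompl {E : Type*} [AddCommGroup E] [Module ℝ E] {S : Set E}
    {M : Submodule ℝ E} (hM : IsCompl (affineSpan ℝ S).direction M) {α e : E} (hα : α ∈ S)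
    (he : e ∈ M) (he0 : e ≠ 0) {c : ℝ} (hc : c ≠ 0) : α + c • e ∉ S := by
  intro hmem
  have hce : c • e ∈ (affineSpan ℝ S).direction := by
    simpa using AffineSubspace.vsub_mem_direction (mem_affineSpan ℝ hmem) (mem_affineSpan ℝ hα)
  rw [Submodule.smul_mem_iff _ hc] at hce
  exact he0 ((Submodule.disjoint_def.mp hM.disjoint) e hce he)

theorem exists_unit_mem_hull_vadd_of_isCompl {E : Type*} [NormedAddCommGroup E]
    [NormedSpace ℝ E] {S P : Set E} {M : Submodule ℝ E}
    (hM : IsCompl (affineSpan ℝ S).direction M) {α : E} (hα : α ∈ intrinsicInterior ℝ S)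
    (hSP : S ⊆ P) (hP : (interior P).Nonempty) (hS : affineSpan ℝ S ≠ ⊤) :
    ∃ e ∈ (hull ℝ (-α +ᵥ P) : Set E) ∩ M, ‖e‖ = 1 := by
  obtain ⟨y, hyP, hyS⟩ : ∃ y ∈ P, y ∉ affineSpan ℝ S := by
    by_contra! h
    refine hS (top_unique ?_)
    rw [← isOpen_interior.affineSpan_eq_top hP]
    exact (affineSpan_mono ℝ interior_subset).trans (affineSpan_le.mpr h)
  obtain ⟨l, hl, m, hm, hlm⟩ :=
    Submodule.mem_sup.mp (hM.sup_eq_top ▸ Submodule.mem_top (x := -α + y))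
  have hm0 : m ≠ 0 := by
    rintro rfl
    have hy : y = l +ᵥ α := by
      rw [add_zero] at hlm
      rw [vadd_eq_add, hlm]
      abel
    exact hyS (hy ▸ AffineSubspace.vadd_mem_of_mem_direction hl
      (mem_affineSpan ℝ (intrinsicInterior_subset hα)))
  have hmK : m ∈ hull ℝ (-α +ᵥ P) := by
    have hl' : -l ∈ hull ℝ (-α +ᵥ P) :=
      Submodule.span_mono (Set.vadd_set_mono hSP)
        (mem_hull_vadd_of_mem_direction hα (Submodule.neg_mem _ hl))
    have hy' : -α + y ∈ hull ℝ (-α +ᵥ P) := subset_hull (Set.vadd_mem_vadd_set hyP)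
    simpa [← hlm] using Submodule.add_mem _ hy' hl'
  refine ⟨‖m‖⁻¹ • m, ⟨smul_mem _ (by positivity) hmK, M.smul_mem _ hm⟩, ?_⟩
  rw [norm_smul, norm_inv, norm_norm, inv_mul_cancel₀ (norm_ne_zero_iff.mpr hm0)]

theorem exists_norm_eq_one_forall_mem_of_antitone {E : Type*} [NormedAddCommGroup E]
    [NormedSpace ℝ E] [FiniteDimensional ℝ E] (C : ℕ → Set E) (hC : ∀ i, C (i + 1) ⊆ C i)
    (hC_closed : ∀ i, IsClosed (C i)) (hC_unit : ∀ i, ∃ e ∈ C i, ‖e‖ = 1) :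
    ∃ e : E, ‖e‖ = 1 ∧ ∀ i, e ∈ C i := by
  obtain ⟨e, he⟩ := IsCompact.nonempty_iInter_of_sequence_nonempty_isCompact_isClosed
    (fun i => C i ∩ Metric.sphere 0 1) (fun i => Set.inter_subset_inter_left _ (hC i))
    (fun i => by simpa [Set.Nonempty] using hC_unit i)
    ((isCompact_sphere 0 1).inter_left (hC_closed 0))
    (fun i => (hC_closed i).inter Metric.isClosed_sphere)
  simp only [Set.mem_iInter, Set.mem_inter_iff, mem_sphere_zero_iff_norm] at he
  exact ⟨e, (he 0).2, fun i => (he i).1⟩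

theorem common_ray_general (s : ℕ) (T : ℕ → Set (Fin s → ℝ))
    (hdec : ∀ i, T (i + 1) ⊆ T i)
    (hpoly : ∀ i, ∃ V : Finset (Fin s → ℝ), T i = convexHull ℝ (V : Set (Fin s → ℝ)))
    (hfull : ∀ i, (interior (T i)).Nonempty)
    (S : Set (Fin s → ℝ)) (hSne : S.Nonempty) (hScv : Convex ℝ S)
    (hSsub : S ⊆ ⋂ i, T i) (hSint : interior S = ∅) :
    ∃ α ∈ S, ∃ e : Fin s → ℝ,
      ∀ i, ∃ l : ℝ, 0 ≤ l ∧ α + l • e ∈ T i ∧ α + l • e ∉ S := by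
  choose V hV using hpoly
  have hST : ∀ i, S ⊆ T i := fun i x hx => Set.mem_iInter.mp (hSsub hx) i
  have hS : affineSpan ℝ S ≠ ⊤ := by
    rw [Ne, ← hScv.interior_nonempty_iff_affineSpan_eq_top, hSint]
    exact Set.not_nonempty_empty
  obtain ⟨α, hα⟩ := hSne.intrinsicInterior hScv
  have hαS : α ∈ S := intrinsicInterior_subset hα
  obtain ⟨M, hM⟩ := (affineSpan ℝ S).direction.exists_isCompl
  obtain ⟨e, he1, he⟩ := exists_norm_eq_one_forall_mem_of_antitone
    (fun i => (hull ℝ (-α +ᵥ T i) : Set (Fin s → ℝ)) ∩ M)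
    (fun i => Set.inter_subset_inter_left _ (Submodule.span_mono (Set.vadd_set_mono (hdec i))))
    (fun i => hV i ▸ (isClosed_hull_vadd_convexHull _ _).inter M.closed_of_finiteDimensional)
    (fun i => exists_unit_mem_hull_vadd_of_isCompl hM hα (hST i) (hfull i) hS)
  refine ⟨α, hαS, e, fun i => ?_⟩
  obtain ⟨heK, heM⟩ := he i
  obtain ⟨c, hc, hcT⟩ :=
    (hV i ▸ convex_convexHull ℝ _).exists_pos_add_smul_mem_of_mem_hull (hST i hαS) heK
  exact ⟨c, hc.le, hcT, add_smul_notMem_of_isCompl hM hαS heM (by rintro rfl; simp at he1) hc.ne'⟩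

theorem common_ray (s : ℕ) (hs : 0 < s) (T : ℕ → Set (Fin s → ℝ))
    (hdec : ∀ i, T (i + 1) ⊆ T i)
    (hpoly : ∀ i, ∃ V : Finset (Fin s → ℝ), T i = convexHull ℝ (V : Set (Fin s → ℝ)))
    (hfull : ∀ i, (interior (T i)).Nonempty)
    (S : Set (Fin s → ℝ)) (hSne : S.Nonempty) (hScl : IsClosed S) (hScv : Convex ℝ S)
    (hSsub : S ⊆ ⋂ i, T i) (hSint : interior S = ∅) :
    ∃ α ∈ S, ∃ e : Fin s → ℝ,
      ∀ i, ∃ l : ℝ, 0 ≤ l ∧ α + l • e ∈ T i ∧ α + l • e ∉ S :=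
  common_ray_general s T hdec hpoly hfull S hSne hScv hSsub hSint
end

section
/- Let d ∈ ℤ_{>0} and let (Qᵢ)_{i∈ℕ} be a sequence of subsets of ℝ^d with Q_{i+1} ⊆ Qᵢ for all i, such that each Qᵢ is the convex hull of a finite subset of ℝ^d and has nonempty interior. Then there exists z ∈ ℝ^d with z ≠ 0 such that for every i there exists a real number cᵢ > 0 with cᵢ·z ∈ Qᵢ. -/
/-!
The rays from the origin meeting `Qᵢ = conv Vᵢ` are those spanned by the nonzero points of the
cone `Cᵢ` generated by `Vᵢ`, and the `Cᵢ` form a decreasing sequence of nontrivial cones.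
Finitely generated cones are closed: by Carathéodory's theorem for cones, `Cᵢ` is a finite union
of cones generated by linearly independent vectors, each the image of a closed orthant under an
injective linear map. So the traces of the `Cᵢ` on the unit sphere are nested nonempty compact
sets, and any point of their intersection spans a common ray.
-/

open Set Finset Topology

namespace PointedCone

section Algebra

variable {E : Type*} [AddCommGroup E] [Module ℝ E]

lemma mem_hull_finset_iff_s7 {s : Finset E} {x : E} :
    x ∈ hull ℝ (s : Set E) ↔ ∃ f : E → ℝ, (∀ v ∈ s, 0 ≤ f v) ∧ ∑ v ∈ s, f v • v = x := by
  constructor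
  · rw [Submodule.mem_span_finset]
    rintro ⟨f, -, rfl⟩
    exact ⟨fun v => (f v : ℝ), fun v _ => (f v).2, rfl⟩
  · rintro ⟨f, hf, rfl⟩
    exact Submodule.sum_mem _ fun v hv =>
      Submodule.smul_mem _ (⟨f v, hf v hv⟩ : {c : ℝ // 0 ≤ c}) (Submodule.subset_span hv)

lemma convexHull_subset_hull (s : Set E) : convexHull ℝ s ⊆ hull ℝ s :=
  convexHull_min subset_hull (hull ℝ s).convex

lemma exists_pos_smul_mem_convexHull_of_mem_hull {s : Finset E} {x : E}
    (hx : x ∈ hull ℝ (s : Set E)) (hx0 : x ≠ 0) :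
    ∃ c : ℝ, 0 < c ∧ c • x ∈ convexHull ℝ (s : Set E) := by
  obtain ⟨f, hf, rfl⟩ := mem_hull_finset_iff_s7.1 hx
  have hsum : 0 < ∑ v ∈ s, f v := by
    refine (sum_nonneg hf).lt_of_ne fun h => hx0 <| sum_eq_zero fun v hv => ?_
    rw [(sum_eq_zero_iff_of_nonneg hf).1 h.symm v hv, zero_smul]
  exact ⟨_, inv_pos.2 hsum, s.centerMass_mem_convexHull hf hsum fun v hv => hv⟩

/-- The exchange step of Carathéodory's theorem for cones: moving the coefficients `f` along a
linear relation `g` until the first of them vanishes. -/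
lemma exists_sum_smul_mem_hull_erase [DecidableEq E] {s : Finset E} {f g : E → ℝ}
    (hf : ∀ v ∈ s, 0 ≤ f v) (hg : ∑ v ∈ s, g v • v = 0) (hpos : ∃ v ∈ s, 0 < g v) :
    ∃ w ∈ s, ∑ v ∈ s, f v • v ∈ hull ℝ (s.erase w : Set E) := by
  obtain ⟨w, hw, hmin⟩ :=
    (s.filter (0 < g ·)).exists_min_image (fun v => f v / g v) (by simpa [Finset.Nonempty])
  rw [mem_filter] at hw
  set t := f w / g w
  have ht : 0 ≤ t := div_nonneg (hf w hw.1) hw.2.le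
  refine ⟨w, hw.1, mem_hull_finset_iff_s7.2 ⟨fun v => f v - t * g v, fun v hv => ?_, ?_⟩⟩
  · have hvs := mem_of_mem_erase hv
    rcases le_or_gt (g v) 0 with hgv | hgv
    · nlinarith [hf v hvs]
    · linarith [(le_div_iff₀ hgv).1 (hmin v (mem_filter.2 ⟨hvs, hgv⟩))]
  · rw [sum_erase _ (by simp [t, div_mul_cancel₀ _ hw.2.ne'])]
    simp only [sub_smul, sum_sub_distrib, mul_smul, ← smul_sum, hg, smul_zero, sub_zero]

theorem exists_linearIndepOn_mem_hull {s : Finset E} {x : E} (hx : x ∈ hull ℝ (s : Set E)) :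
    ∃ t ⊆ s, LinearIndepOn ℝ id (t : Set E) ∧ x ∈ hull ℝ (t : Set E) := by
  classical
  induction s using Finset.strongInduction with
  | H s ih =>
  by_cases hli : LinearIndepOn ℝ id (s : Set E)
  · exact ⟨s, subset_rfl, hli, hx⟩
  obtain ⟨g, hg, v, hv, hgv⟩ := not_linearIndepOn_finset_iff.1 hli
  obtain ⟨f, hf, rfl⟩ := mem_hull_finset_iff_s7.1 hx
  obtain ⟨w, hw, hxw⟩ : ∃ w ∈ s, ∑ v ∈ s, f v • v ∈ hull ℝ (s.erase w : Set E) := by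
    rcases hgv.lt_or_gt with hneg | hpos
    · refine exists_sum_smul_mem_hull_erase hf (g := -g) ?_ ⟨v, hv, neg_pos.2 hneg⟩
      simpa [neg_smul, sum_neg_distrib] using hg
    · exact exists_sum_smul_mem_hull_erase hf (by simpa using hg) ⟨v, hv, hpos⟩
  obtain ⟨t, hts, ht⟩ := ih _ (erase_ssubset hw) hxw
  exact ⟨t, hts.trans (erase_subset _ _), ht⟩

end Algebra

section Topology

variable {E : Type*} [AddCommGroup E] [Module ℝ E] [TopologicalSpace E] [IsTopologicalAddGroup E]
  [ContinuousSMul ℝ E] [T2Space E]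

lemma isClosed_hull_of_linearIndepOn_s7 {s : Finset E} (hs : LinearIndepOn ℝ id (s : Set E)) :
    IsClosed (hull ℝ (s : Set E) : Set E) := by
  let L := Fintype.linearCombination ℝ ((↑) : ↥(s : Set E) → E)
  have hL : IsClosedEmbedding L := LinearMap.isClosedEmbedding_of_injective
    (LinearMap.ker_eq_bot.2 (linearIndependent_iff_injective_fintypeLinearCombination.1 hs))
  have hhull : (hull ℝ (s : Set E) : Set E) = L '' Ici 0 := by
    ext x
    simp only [SetLike.mem_coe, Submodule.mem_span_iff_of_fintype, mem_image, Set.mem_Ici,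
      L, Fintype.linearCombination_apply]
    constructor
    · rintro ⟨f, rfl⟩
      exact ⟨fun v => f v, fun v => (f v).2, rfl⟩
    · rintro ⟨f, hf, rfl⟩
      exact ⟨fun v => ⟨f v, hf v⟩, rfl⟩
  rw [hhull]
  exact hL.isClosedMap _ isClosed_Ici

theorem isClosed_hull_finset_s7 (s : Finset E) : IsClosed (hull ℝ (s : Set E) : Set E) := by
  classical
  have hunion : (hull ℝ (s : Set E) : Set E) =
      ⋃ t ∈ s.powerset.filter (fun t : Finset E => LinearIndepOn ℝ id (t : Set E)),
        (hull ℝ (t : Set E) : Set E) := by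
    ext x
    simp only [mem_iUnion, mem_filter, Finset.mem_powerset, SetLike.mem_coe, exists_prop]
    constructor
    · intro hx
      obtain ⟨t, hts, ht, hxt⟩ := exists_linearIndepOn_mem_hull hx
      exact ⟨t, ⟨hts, ht⟩, hxt⟩
    · rintro ⟨t, ⟨hts, -⟩, hxt⟩
      exact Submodule.span_mono (coe_subset.2 hts) hxt
  rw [hunion]
  exact isClosed_biUnion_finset fun t ht => isClosed_hull_of_linearIndepOn_s7 (mem_filter.1 ht).2

end Topology

theorem exists_ne_zero_forall_mem_of_antitone {E : Type*} [NormedAddCommGroup E]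
    [NormedSpace ℝ E] [FiniteDimensional ℝ E] {C : ℕ → PointedCone ℝ E} (hC : Antitone C)
    (hclosed : ∀ i, IsClosed (C i : Set E)) (hne : ∀ i, C i ≠ ⊥) :
    ∃ z ≠ 0, ∀ i, z ∈ C i := by
  let K i := Metric.sphere (0 : E) 1 ∩ C i
  have hK : ∀ i, (K i).Nonempty := fun i => by
    obtain ⟨x, hx, hx0⟩ := Submodule.exists_mem_ne_zero_of_ne_bot (hne i)
    refine ⟨(‖x‖⁻¹ : ℝ) • x, by simpa using norm_smul_inv_norm (𝕜 := ℝ) hx0, ?_⟩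
    exact (C i).smul_mem (by positivity) hx
  obtain ⟨z, hz⟩ := IsCompact.nonempty_iInter_of_sequence_nonempty_isCompact_isClosed K
    (fun i => inter_subset_inter_right _ (hC i.le_succ)) hK
    ((isCompact_sphere 0 1).inter_right (hclosed 0))
    fun i => Metric.isClosed_sphere.inter (hclosed i)
  rw [mem_iInter] at hz
  refine ⟨z, fun h => ?_, fun i => (hz i).2⟩
  simpa [h] using (hz 0).1

end PointedCone

lemma Set.exists_mem_ne_of_nonempty_interior {X : Type*} [TopologicalSpace X] {s : Set X}
    (hs : (interior s).Nonempty) (y : X) [(𝓝[≠] y).NeBot] : ∃ x ∈ s, x ≠ y := by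
  by_contra! h
  have hsy : s ⊆ {y} := h
  simpa [interior_singleton] using hs.mono (interior_mono hsy)

open PointedCone in
theorem common_ray_from_origin (d : ℕ) (hd : 0 < d) (Q : ℕ → Set (Fin d → ℝ))
    (hdec : ∀ i, Q (i + 1) ⊆ Q i)
    (hpoly : ∀ i, ∃ V : Finset (Fin d → ℝ), Q i = convexHull ℝ (V : Set (Fin d → ℝ)))
    (hfull : ∀ i, (interior (Q i)).Nonempty) :
    ∃ z : Fin d → ℝ, z ≠ 0 ∧ ∀ i, ∃ c : ℝ, 0 < c ∧ c • z ∈ Q i := by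
  have : Nonempty (Fin d) := ⟨⟨0, hd⟩⟩
  choose V hV using hpoly
  have hQ : ∀ i, Q i ⊆ hull ℝ (V i : Set (Fin d → ℝ)) := fun i =>
    hV i ▸ convexHull_subset_hull _
  have hanti : Antitone fun i => hull ℝ (V i : Set (Fin d → ℝ)) :=
    antitone_nat_of_succ_le fun i => Submodule.span_le.2 <|
      (hV (i + 1) ▸ subset_convexHull ℝ _).trans ((hdec i).trans (hQ i))
  have hne : ∀ i, hull ℝ (V i : Set (Fin d → ℝ)) ≠ ⊥ := fun i => by
    obtain ⟨x, hx, hx0⟩ := Set.exists_mem_ne_of_nonempty_interior (hfull i) 0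
    exact (Submodule.ne_bot_iff _).2 ⟨x, hQ i hx, hx0⟩
  obtain ⟨z, hz0, hz⟩ :=
    exists_ne_zero_forall_mem_of_antitone hanti (fun i => isClosed_hull_finset_s7 _) hne
  exact ⟨z, hz0, fun i => hV i ▸ exists_pos_smul_mem_convexHull_of_mem_hull (hz i) hz0⟩
end

section
/- Let s ∈ ℤ_{>0} and let (Pᵢ)_{i∈ℕ} be a sequence of subsets of ℝ^s with Pᵢ ⊆ P_{i+1} and Pᵢ ≠ P_{i+1} for every i (a strictly increasing sequence). Suppose the union ⋃_{i∈ℕ} Pᵢ is compact. Then there exist a point β ∈ ℝ^s and an index i₀ such that β ∈ Pᵢ for all i ≥ i₀ and β is an unstable point for the sequence (Pᵢ): for every open set U ⊆ ℝ^s containing β, the family { Pᵢ ∩ U : i ∈ ℕ } is an infinite set of subsets of ℝ^s. -/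
/-!
Pick `x n ∈ P (n + 1) \ P n` and let `β` be a cluster point of `x` in the compact union; `β` lies
in all late `P i`. If some neighbourhood `U` of `β` met the `P i` in only finitely many ways, the
monotone sequence `P i ∩ U` would be constant from some `N` on, so no `x n` with `n ≥ N` could lie
in `U`, contradicting that `x` comes back to `U` infinitely often.
-/

open Filter Topology

lemma Monotone.exists_forall_ge_eq_of_finite_range {α : Type*} [PartialOrder α] {f : ℕ → α}
    (hf : Monotone f) (hfin : (Set.range f).Finite) : ∃ N, ∀ m, N ≤ m → f m = f N := by
  obtain ⟨N, -, hN⟩ := Set.Finite.exists_maximalFor' f Set.univ (by simpa using hfin)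
    Set.univ_nonempty
  exact ⟨N, fun m hm => le_antisymm (hN trivial (hf hm)) (hf hm)⟩

lemma exists_mem_diff_of_ne_succ {X : Type*} {P : ℕ → Set X} (hmono : ∀ i, P i ⊆ P (i + 1))
    (hne : ∀ i, P i ≠ P (i + 1)) : ∃ x : ℕ → X, ∀ n, x n ∈ P (n + 1) ∧ x n ∉ P n := by
  choose x hx using fun i => Set.exists_of_ssubset ((hmono i).ssubset_of_ne (hne i))
  exact ⟨x, hx⟩

lemma infinite_setOf_eq_inter_of_mapClusterPt {X : Type*} [TopologicalSpace X] {P : ℕ → Set X}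
    (hP : Monotone P) {x : ℕ → X} (hx : ∀ n, x n ∈ P (n + 1) ∧ x n ∉ P n) {β : X}
    (hβ : MapClusterPt β atTop x) {U : Set X} (hU : U ∈ 𝓝 β) :
    {Q : Set X | ∃ i, Q = P i ∩ U}.Infinite := by
  intro hfin
  have hrange : (Set.range fun i => P i ∩ U).Finite := by
    simpa only [Set.range, eq_comm] using hfin
  obtain ⟨N, hN⟩ := Monotone.exists_forall_ge_eq_of_finite_range
    (fun i j hij => Set.inter_subset_inter_left U (hP hij)) hrange
  obtain ⟨n, hNn, hxU⟩ := (hβ.frequently hU).forall_exists_of_atTop N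
  have hstable : P (n + 1) ∩ U = P n ∩ U := by
    rw [hN n hNn, hN (n + 1) (hNn.trans n.le_succ)]
  have hmem : x n ∈ P n ∩ U := hstable ▸ ⟨(hx n).1, hxU⟩
  exact (hx n).2 hmem.1

theorem exists_unstable_point_general (s : ℕ) (P : ℕ → Set (Fin s → ℝ))
    (hmono : ∀ i, P i ⊆ P (i + 1)) (hne : ∀ i, P i ≠ P (i + 1))
    (hcomp : IsCompact (⋃ i, P i)) :
    ∃ β : Fin s → ℝ, ∃ i₀ : ℕ, (∀ i, i₀ ≤ i → β ∈ P i) ∧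
      ∀ U : Set (Fin s → ℝ), IsOpen U → β ∈ U →
        { Q : Set (Fin s → ℝ) | ∃ i, Q = P i ∩ U }.Infinite := by
  have hP : Monotone P := monotone_nat_of_le_succ hmono
  obtain ⟨x, hx⟩ := exists_mem_diff_of_ne_succ hmono hne
  obtain ⟨β, hβP, hβ⟩ := hcomp.exists_mapClusterPt (u := x) (f := atTop) <|
    tendsto_principal.2 (Eventually.of_forall fun n => Set.mem_iUnion.2 ⟨n + 1, (hx n).1⟩)
  obtain ⟨i₀, hβi₀⟩ := Set.mem_iUnion.1 hβP
  exact ⟨β, i₀, fun i hi => hP hi hβi₀, fun U hU hβU =>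
    infinite_setOf_eq_inter_of_mapClusterPt hP hx hβ (hU.mem_nhds hβU)⟩

theorem exists_unstable_point (s : ℕ) (hs : 0 < s) (P : ℕ → Set (Fin s → ℝ))
    (hmono : ∀ i, P i ⊆ P (i + 1)) (hne : ∀ i, P i ≠ P (i + 1))
    (hcomp : IsCompact (⋃ i, P i)) :
    ∃ β : Fin s → ℝ, ∃ i₀ : ℕ, (∀ i, i₀ ≤ i → β ∈ P i) ∧
      ∀ U : Set (Fin s → ℝ), IsOpen U → β ∈ U →
        { Q : Set (Fin s → ℝ) | ∃ i, Q = P i ∩ U }.Infinite :=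
  exists_unstable_point_general s P hmono hne hcomp
end

section
/- With notation as in the context, assume the set {f(a) : f ∈ 𝓕} ∪ {f(b) : f ∈ 𝓕} satisfies the descending chain condition, and let K ∈ ℝ. Let W be the set of all linear functions w such that there exist an integer s ∈ ℤ_{>0}, positive integers r₁, …, r_s, and functions w₁, …, w_s ∈ 𝒟(𝓕, [a,b]), none of which is identically zero, satisfying r₁w₁(t) + ⋯ + r_s w_s(t) = K for all t ∈ [a,b], and such that w = wⱼ for some j ∈ {1, …, s}. Then W is a finite set. -/
/-- The set of linear functions appearing as a summand in some numerically
trivial relation `r₁w₁ + ⋯ + r_s w_s = K` on `[a,b]` with all `wⱼ ∈ 𝒟(𝓕,[a,b])`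
nonzero and all `rⱼ` positive integers. -/
def Wset (F : Set (ℝ → ℝ)) (a b K : ℝ) : Set (ℝ → ℝ) :=
  { w | ∃ s : ℕ, 0 < s ∧ ∃ r : Fin s → ℕ, ∃ ws : Fin s → ℝ → ℝ,
      (∀ j, 0 < r j) ∧ (∀ j, ws j ∈ calD F a b) ∧ (∀ j, ws j ≠ 0) ∧
      (∀ t ∈ Set.Icc a b, ∑ j, (r j : ℝ) * ws j t = K) ∧ ∃ j, w = ws j }

/-!
Every `w ∈ 𝒟(𝓕, [a, b])` is `(m - 1 + v) / m` with `v(a)`, `v(b)` in the additive monoids generated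
by the values of `𝓕` at `a` and at `b`, which are well ordered by the DCC. Hence the values `w(a)`
form a well-ordered set. So do the values `w(b)` over any family with finitely many values at `a`:
if `v(a) = 1`, then `v ≤ 1` on `[a, c]` gives `v(b) ≤ 1`, and otherwise `m ≤ 1 / (1 - w(a))`
is bounded. For a summand `w` of a relation `∑ rⱼ wⱼ = K`, `K - w(t)` is a sum of values of
summands, so the set of values at `t` is also well ordered in reverse, hence finite. A linear
function is determined by its values at `a` and `b`.
-/

open Set

noncomputable def hyperstd (m : ℕ) (x : ℝ) : ℝ := ((m : ℝ) - 1 + x) / m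

section Hyperstd

variable {m : ℕ} {x : ℝ}

lemma hyperstd_mono (m : ℕ) : Monotone (hyperstd m) := fun _ _ hxy =>
  div_le_div_of_nonneg_right (by linarith) m.cast_nonneg

lemma one_sub_hyperstd (hm : 0 < m) (x : ℝ) : 1 - hyperstd m x = (1 - x) / m := by
  have : (m : ℝ) ≠ 0 := by positivity
  unfold hyperstd
  field_simp
  ring

lemma hyperstd_nonneg (hm : 0 < m) (hx : 0 ≤ x) : 0 ≤ hyperstd m x := by
  have : (1 : ℝ) ≤ m := by exact_mod_cast hm
  exact div_nonneg (by linarith) (by linarith)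

lemma hyperstd_le_one_iff (hm : 0 < m) : hyperstd m x ≤ 1 ↔ x ≤ 1 := by
  rw [← sub_nonneg, one_sub_hyperstd hm, le_div_iff₀ (by exact_mod_cast hm), zero_mul,
    sub_nonneg]

lemma hyperstd_lt_one_iff (hm : 0 < m) : hyperstd m x < 1 ↔ x < 1 := by
  rw [← sub_pos, one_sub_hyperstd hm, div_pos_iff_of_pos_right (by exact_mod_cast hm), sub_pos]

lemma natCast_le_one_div_one_sub_hyperstd (hm : 0 < m) (hx₀ : 0 ≤ x) (hx₁ : x < 1) :
    (m : ℝ) ≤ 1 / (1 - hyperstd m x) := by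
  rw [one_sub_hyperstd hm, one_div_div]
  exact le_div_self m.cast_nonneg (by linarith) (by linarith)

end Hyperstd

lemma isWF_image2_hyperstd_finset {T : Set ℝ} (hT : T.IsWF) (s : Finset ℕ) :
    (image2 hyperstd ↑s T).IsWF := by
  rw [← iUnion_image_left]
  exact (Finset.isWF_bUnion s).2 fun m _ => (hT.isPWO.image_of_monotone (hyperstd_mono m)).isWF

/-- A decreasing sequence in this set stays below some `c < 1`, which bounds the `m`s involved. -/
lemma isWF_image2_hyperstd_Ioi {T : Set ℝ} (hT0 : ∀ x ∈ T, 0 ≤ x) (hT : T.IsWF) :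
    (image2 hyperstd (Ioi 0) (T ∩ Iic 1)).IsWF := by
  rw [isWF_iff_no_descending_seq]
  intro f hf hfT
  have hf1 : f 1 < 1 := by
    obtain ⟨m, hm, x, ⟨-, hx⟩, hfx⟩ := hfT 0
    exact (hf zero_lt_one).trans_le (hfx ▸ (hyperstd_le_one_iff hm).2 hx)
  have htail : ∀ n, f (n + 1) ∈ image2 hyperstd ↑(Finset.Iic ⌈1 / (1 - f 1)⌉₊) T := by
    intro n
    obtain ⟨m, hm, x, ⟨hxT, -⟩, hfx⟩ := hfT (n + 1)
    have hle : f (n + 1) ≤ f 1 := hf.antitone (Nat.le_add_left 1 n)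
    have hx₁ : x < 1 := (hyperstd_lt_one_iff hm).1 (hfx ▸ hle.trans_lt hf1)
    have hm_le : (m : ℝ) ≤ 1 / (1 - f 1) :=
      (natCast_le_one_div_one_sub_hyperstd hm (hT0 x hxT) hx₁).trans
        (one_div_le_one_div_of_le (by linarith) (by linarith))
    exact ⟨m, Finset.mem_Iic.2 (Nat.cast_le.1 (hm_le.trans (Nat.le_ceil _))), x, hxT, hfx⟩
  exact isWF_iff_no_descending_seq.1 (isWF_image2_hyperstd_finset hT _) (fun n => f (n + 1))
    (hf.comp_strictMono fun _ _ h => Nat.succ_lt_succ h) htail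

section Closure

variable {S : Set ℝ}

lemma nonneg_of_mem_addSubmonoidClosure (hS0 : ∀ x ∈ S, 0 ≤ x) {x : ℝ}
    (hx : x ∈ AddSubmonoid.closure S) : 0 ≤ x :=
  (AddSubmonoid.closure_le (S := AddSubmonoid.nonneg ℝ)).2 hS0 hx

lemma isWF_addSubmonoidClosure (hS0 : ∀ x ∈ S, 0 ≤ x) (hS : S.IsWF) :
    (AddSubmonoid.closure S : Set ℝ).IsWF :=
  (hS.isPWO.addSubmonoid_closure hS0).isWF

lemma finite_of_isWF_of_sub_mem_addSubmonoidClosure (K : ℝ) (hS0 : ∀ x ∈ S, 0 ≤ x)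
    (hS : S.IsWF) (hK : ∀ x ∈ S, K - x ∈ AddSubmonoid.closure S) : S.Finite := by
  by_contra hinf
  have : Infinite S := Set.infinite_coe_iff.2 hinf
  obtain ⟨f, hf | hf⟩ := Infinite.exists_strictMono_or_strictAnti S
  · exact isWF_iff_no_descending_seq.1 (isWF_addSubmonoidClosure hS0 hS) (fun n => K - f n)
      (fun _ _ h => sub_lt_sub_left (Subtype.coe_lt_coe.2 (hf h)) K) fun n => hK _ (f n).2
  · exact isWF_iff_no_descending_seq.1 hS (fun n => f n) hf fun n => (f n).2

end Closure

namespace IsLinearFun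

variable {a b c : ℝ} {f g : ℝ → ℝ}

lemma antitone_of_apply_le (hf : IsLinearFun f) (hac : a < c) (h : f c ≤ f a) : Antitone f := by
  obtain ⟨p, q, hpq⟩ := hf
  rw [hpq, hpq] at h
  have hp : p ≤ 0 := by nlinarith
  intro x y hxy
  rw [hpq, hpq]
  nlinarith

lemma eq_of_apply_eq (hf : IsLinearFun f) (hg : IsLinearFun g) (hab : a ≠ b)
    (ha : f a = g a) (hb : f b = g b) : f = g := by
  obtain ⟨p, q, hf⟩ := hf
  obtain ⟨p', q', hg⟩ := hg
  rw [hf, hg] at ha hb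
  have hp : p = p' := mul_right_cancel₀ (sub_ne_zero.2 hab) (by linarith)
  have hq : q = q' := by subst hp; linarith
  funext t
  rw [hf, hg, hp, hq]

end IsLinearFun

lemma finite_of_isLinearFun_of_finite_image_apply {G : Set (ℝ → ℝ)} {a b : ℝ} (hab : a ≠ b)
    (hG : ∀ w ∈ G, IsLinearFun w) (ha : ((fun w => w a) '' G).Finite)
    (hb : ((fun w => w b) '' G).Finite) : G.Finite := by
  refine Finite.of_finite_image (f := fun w => (w a, w b)) ((ha.prod hb).subset ?_)
    fun v hv w hw hvw => ?_
  · rintro _ ⟨w, hw, rfl⟩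
    exact ⟨mem_image_of_mem _ hw, mem_image_of_mem _ hw⟩
  · obtain ⟨hva, hvb⟩ := Prod.mk.inj hvw
    exact (hG v hv).eq_of_apply_eq (hG w hw) hab hva hvb

section CalD

variable {F : Set (ℝ → ℝ)} {a b c t : ℝ} {v w : ℝ → ℝ}

lemma isLinearFun_of_mem_FPlus (hlin : ∀ f ∈ F, IsLinearFun f) (hv : v ∈ FPlus F a c) :
    IsLinearFun v := by
  rcases hv with rfl | ⟨⟨k, -, n, f, -, hf, rfl⟩, -⟩
  · exact ⟨0, 0, fun t => by simp⟩
  · choose p q hpq using fun i => hlin (f i) (hf i)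
    refine ⟨∑ i, n i * p i, ∑ i, n i * q i, fun t => ?_⟩
    simp only [hpq, Finset.sum_mul, ← Finset.sum_add_distrib]
    exact Finset.sum_congr rfl fun i _ => by ring

lemma apply_mem_addSubmonoidClosure_of_mem_FPlus (hv : v ∈ FPlus F a c) (t : ℝ) :
    v t ∈ AddSubmonoid.closure ((fun f => f t) '' F) := by
  rcases hv with rfl | ⟨⟨k, -, n, f, -, hf, rfl⟩, -⟩
  · exact zero_mem _
  · refine sum_mem fun i _ => ?_
    rw [← nsmul_eq_mul]
    exact nsmul_mem (AddSubmonoid.subset_closure (mem_image_of_mem _ (hf i))) (n i)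

lemma apply_le_one_of_mem_FPlus (hv : v ∈ FPlus F a c) (ht : t ∈ Icc a c) : v t ≤ 1 := by
  rcases hv with rfl | ⟨-, hv⟩
  · simp
  · exact hv t ht

lemma exists_hyperstd_of_mem_calD (hw : w ∈ calD F a b) :
    ∃ c ∈ Ioc a b, ∃ m, 0 < m ∧ ∃ v ∈ FPlus F a c, w = fun t => hyperstd m (v t) := by
  simp only [calD, mem_iUnion] at hw
  obtain ⟨c, hc, m, hm, v, hv, rfl, -⟩ := hw
  exact ⟨c, hc, m, hm, v, hv, rfl⟩

lemma isLinearFun_of_mem_calD (hlin : ∀ f ∈ F, IsLinearFun f) (hw : w ∈ calD F a b) :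
    IsLinearFun w := by
  obtain ⟨c, -, m, -, v, hv, rfl⟩ := exists_hyperstd_of_mem_calD hw
  obtain ⟨p, q, hpq⟩ := isLinearFun_of_mem_FPlus hlin hv
  exact ⟨p / m, ((m : ℝ) - 1 + q) / m, fun t => by simp only [hyperstd, hpq]; ring⟩

lemma apply_nonneg_of_mem_calD (hF0 : ∀ f ∈ F, 0 ≤ f t) (hw : w ∈ calD F a b) : 0 ≤ w t := by
  obtain ⟨c, -, m, hm, v, hv, rfl⟩ := exists_hyperstd_of_mem_calD hw
  exact hyperstd_nonneg hm (nonneg_of_mem_addSubmonoidClosure (by simpa using hF0)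
    (apply_mem_addSubmonoidClosure_of_mem_FPlus hv t))

lemma apply_left_mem_of_mem_calD (hw : w ∈ calD F a b) :
    w a ∈ image2 hyperstd (Ioi 0) (AddSubmonoid.closure ((fun f => f a) '' F) ∩ Iic 1) := by
  obtain ⟨c, hc, m, hm, v, hv, rfl⟩ := exists_hyperstd_of_mem_calD hw
  exact ⟨m, hm, v a, ⟨apply_mem_addSubmonoidClosure_of_mem_FPlus hv a,
    apply_le_one_of_mem_FPlus hv ⟨le_rfl, hc.1.le⟩⟩, rfl⟩

lemma apply_right_mem_of_mem_calD (hlin : ∀ f ∈ F, IsLinearFun f) (hF0 : ∀ f ∈ F, 0 ≤ f a)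
    (hw : w ∈ calD F a b) :
    w b ∈ image2 hyperstd (Ioi 0) (AddSubmonoid.closure ((fun f => f b) '' F) ∩ Iic 1) ∨
      w a < 1 ∧ ∃ m : ℕ, (m : ℝ) ≤ 1 / (1 - w a) ∧
        w b ∈ hyperstd m '' AddSubmonoid.closure ((fun f => f b) '' F) := by
  obtain ⟨c, ⟨hac, hcb⟩, m, hm, v, hv, rfl⟩ := exists_hyperstd_of_mem_calD hw
  have hva : v a ≤ 1 := apply_le_one_of_mem_FPlus hv ⟨le_rfl, hac.le⟩
  rcases hva.lt_or_eq with hva | hva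
  · have hva0 : 0 ≤ v a := nonneg_of_mem_addSubmonoidClosure (by simpa using hF0)
      (apply_mem_addSubmonoidClosure_of_mem_FPlus hv a)
    exact Or.inr ⟨(hyperstd_lt_one_iff hm).2 hva, m,
      natCast_le_one_div_one_sub_hyperstd hm hva0 hva,
      v b, apply_mem_addSubmonoidClosure_of_mem_FPlus hv b, rfl⟩
  · have hvc : v c ≤ v a := hva ▸ apply_le_one_of_mem_FPlus hv ⟨hac.le, le_rfl⟩
    have hvb : v b ≤ 1 :=
      hva ▸ (isLinearFun_of_mem_FPlus hlin hv).antitone_of_apply_le hac hvc (hac.le.trans hcb)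
    exact Or.inl ⟨m, hm, v b, ⟨apply_mem_addSubmonoidClosure_of_mem_FPlus hv b, hvb⟩, rfl⟩

end CalD

lemma DCC.isWF {S : Set ℝ} (h : DCC S) : S.IsWF :=
  isWF_iff_no_descending_seq.2 fun f hf hS => h ⟨f, hS, hf⟩

section Values

variable {F : Set (ℝ → ℝ)} {a b : ℝ}

lemma isWF_image_apply_left_calD (hF0 : ∀ f ∈ F, 0 ≤ f a) (hF : ((fun f => f a) '' F).IsWF) :
    ((fun w => w a) '' calD F a b).IsWF := by
  have hS0 : ∀ x ∈ (fun f => f a) '' F, 0 ≤ x := by simpa using hF0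
  refine (isWF_image2_hyperstd_Ioi (fun _ => nonneg_of_mem_addSubmonoidClosure hS0)
    (isWF_addSubmonoidClosure hS0 hF)).mono ?_
  rintro _ ⟨w, hw, rfl⟩
  exact apply_left_mem_of_mem_calD hw

lemma isWF_image_apply_right_of_finite (hlin : ∀ f ∈ F, IsLinearFun f)
    (hF0a : ∀ f ∈ F, 0 ≤ f a) (hF0b : ∀ f ∈ F, 0 ≤ f b) (hF : ((fun f => f b) '' F).IsWF)
    {G : Set (ℝ → ℝ)} (hG : G ⊆ calD F a b) (hGa : ((fun w => w a) '' G).Finite) :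
    ((fun w => w b) '' G).IsWF := by
  have hS0 : ∀ x ∈ (fun f => f b) '' F, 0 ≤ x := by simpa using hF0b
  set T : Set ℝ := ↑(AddSubmonoid.closure ((fun f => f b) '' F))
  have hT : T.IsWF := isWF_addSubmonoidClosure hS0 hF
  obtain ⟨B, hB⟩ := (hGa.image fun y => 1 / (1 - y)).bddAbove
  refine ((isWF_image2_hyperstd_Ioi (fun _ => nonneg_of_mem_addSubmonoidClosure hS0) hT).union
    (isWF_image2_hyperstd_finset hT (Finset.Iic ⌈B⌉₊))).mono ?_
  rintro _ ⟨w, hw, rfl⟩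
  rcases apply_right_mem_of_mem_calD hlin hF0a (hG hw) with h | ⟨-, m, hm, x, hx, hwx⟩
  · exact Or.inl h
  · have hmB : (m : ℝ) ≤ B := hm.trans (hB ⟨w a, mem_image_of_mem _ hw, rfl⟩)
    exact Or.inr ⟨m, Finset.mem_Iic.2 (Nat.cast_le.1 (hmB.trans (Nat.le_ceil B))), x, hx, hwx⟩

end Values

section Relations

variable {F : Set (ℝ → ℝ)} {a b K t : ℝ} {w : ℝ → ℝ}

lemma sub_apply_mem_addSubmonoidClosure_of_mem_Wset (hw : w ∈ Wset F a b K) (ht : t ∈ Icc a b) :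
    K - w t ∈ AddSubmonoid.closure ((fun w => w t) '' Wset F a b K) := by
  obtain ⟨s, hs, r, ws, hr, hD, hne, hrel, j, rfl⟩ := hw
  have hmem : ∀ i, ws i t ∈ AddSubmonoid.closure ((fun w => w t) '' Wset F a b K) := fun i =>
    AddSubmonoid.subset_closure ⟨ws i, ⟨s, hs, r, ws, hr, hD, hne, hrel, i, rfl⟩, rfl⟩
  have hK : K - ws j t = (r j - 1) • ws j t + ∑ i ∈ Finset.univ.erase j, r i • ws i t := by
    rw [← hrel t ht, ← Finset.add_sum_erase _ _ (Finset.mem_univ j)]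
    simp only [nsmul_eq_mul, Nat.cast_sub (hr j)]
    ring
  rw [hK]
  exact add_mem (nsmul_mem (hmem j) _) (sum_mem fun i _ => nsmul_mem (hmem i) _)

lemma finite_image_apply_Wset_of_isWF (ht : t ∈ Icc a b) (hF0 : ∀ f ∈ F, 0 ≤ f t)
    (hWF : ((fun w => w t) '' Wset F a b K).IsWF) : ((fun w => w t) '' Wset F a b K).Finite := by
  refine finite_of_isWF_of_sub_mem_addSubmonoidClosure K ?_ hWF ?_
  · rintro _ ⟨w, ⟨s, -, -, ws, -, hD, -, -, j, rfl⟩, rfl⟩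
    exact apply_nonneg_of_mem_calD hF0 (hD j)
  · rintro _ ⟨w, hw, rfl⟩
    exact sub_apply_mem_addSubmonoidClosure_of_mem_Wset hw ht

lemma Wset_subset_calD : Wset F a b K ⊆ calD F a b := by
  rintro _ ⟨s, -, -, ws, -, hD, -, -, j, rfl⟩
  exact hD j

end Relations

theorem finiteness_of_trivial_relation_summands_general (a b : ℝ) (hab : a < b)
    (F : Set (ℝ → ℝ))
    (hlin : ∀ f ∈ F, IsLinearFun f)
    (hnonneg : ∀ f ∈ F, ∀ t ∈ Set.Icc a b, 0 ≤ f t)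
    (hDCC : DCC (((fun f : ℝ → ℝ => f a) '' F) ∪ ((fun f : ℝ → ℝ => f b) '' F)))
    (K : ℝ) :
    (Wset F a b K).Finite := by
  have ha : a ∈ Icc a b := left_mem_Icc.2 hab.le
  have hb : b ∈ Icc a b := right_mem_Icc.2 hab.le
  have hF0a : ∀ f ∈ F, 0 ≤ f a := fun f hf => hnonneg f hf a ha
  have hF0b : ∀ f ∈ F, 0 ≤ f b := fun f hf => hnonneg f hf b hb
  obtain ⟨hFa, hFb⟩ := isWF_union.1 hDCC.isWF
  have hWa : ((fun w => w a) '' Wset F a b K).Finite := finite_image_apply_Wset_of_isWF ha hF0a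
    ((isWF_image_apply_left_calD hF0a hFa).mono (image_mono Wset_subset_calD))
  have hWb : ((fun w => w b) '' Wset F a b K).Finite := finite_image_apply_Wset_of_isWF hb hF0b
    (isWF_image_apply_right_of_finite hlin hF0a hF0b hFb Wset_subset_calD hWa)
  exact finite_of_isLinearFun_of_finite_image_apply hab.ne
    (fun w hw => isLinearFun_of_mem_calD hlin (Wset_subset_calD hw)) hWa hWb

theorem finiteness_of_trivial_relation_summands (a b : ℝ) (hab : a < b)
    (F : Set (ℝ → ℝ))
    (hlin : ∀ f ∈ F, IsLinearFun f)
    (hnonneg : ∀ f ∈ F, ∀ t ∈ Set.Icc a b, 0 ≤ f t)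
    (hone : (fun _ => (1 : ℝ)) ∈ F)
    (hDCC : DCC (((fun f : ℝ → ℝ => f a) '' F) ∪ ((fun f : ℝ → ℝ => f b) '' F)))
    (K : ℝ) :
    (Wset F a b K).Finite :=
  finiteness_of_trivial_relation_summands_general a b hab F hlin hnonneg hDCC K
end

section
/- With notation as in the context, assume the set {f(a) : f ∈ 𝓕} ∪ {f(b) : f ∈ 𝓕} satisfies the descending chain condition, let K ∈ ℝ, and let W be the set of all linear functions w such that there exist an integer s ∈ ℤ_{>0}, positive integers r₁, …, r_s, and functions w₁, …, w_s ∈ 𝒟(𝓕, [a,b]), none identically zero, satisfying r₁w₁(t) + ⋯ + r_s w_s(t) = K for all t ∈ [a,b] and w = wⱼ for some j. Then the set 𝓕′ := { f ∈ 𝓕 : there exist m, n ∈ ℤ_{>0}, an integer k ≥ 0, positive integers n₁, …, n_k, and functions f₁, …, f_k ∈ 𝓕 such that the linear function (m − 1 + n·f + n₁f₁ + ⋯ + n_k f_k)/m belongs to W } is a finite subset of 𝓕. -/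
open Set

section OrderedMonoid

variable {M : Type*} [AddCommMonoid M]

lemma exists_add_eq_sum_nsmul {ι : Type*} [Fintype ι] [DecidableEq ι] (r : ι → ℕ) (x : ι → M)
    {j : ι} (hj : 0 < r j) :
    ∃ u ∈ AddSubmonoid.closure (range x), x j + u = ∑ i, r i • x i := by
  obtain ⟨k, hk⟩ := Nat.exists_eq_add_one_of_ne_zero hj.ne'
  refine ⟨k • x j + ∑ i ∈ Finset.univ.erase j, r i • x i,
    add_mem (nsmul_mem (AddSubmonoid.subset_closure (mem_range_self j)) _)
      (sum_mem fun i _ => nsmul_mem (AddSubmonoid.subset_closure (mem_range_self i)) _), ?_⟩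
  rw [← Finset.add_sum_erase _ _ (Finset.mem_univ j), hk, succ_nsmul', add_assoc]

variable [PartialOrder M] [IsOrderedCancelAddMonoid M]

lemma Set.IsPWO.finite_setOf_add_eq {T U : Set M} (hT : T.IsPWO) (hU : U.IsPWO) (K : M) :
    {x ∈ T | ∃ u ∈ U, x + u = K}.Finite := by
  have hpairs : {q ∈ T ×ˢ U | q.1 + q.2 = K}.Finite := by
    refine IsAntichain.finite_of_partiallyWellOrderedOn ?_ ((hT.prod hU).mono (sep_subset _ _))
    intro q hq q' hq' hne hle
    exact hne (Prod.ext_iff.2 ((add_eq_add_iff_eq_and_eq hle.1 hle.2).1 (hq.2.trans hq'.2.symm)))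
  refine (hpairs.image Prod.fst).subset ?_
  rintro x ⟨hx, u, hu, rfl⟩
  exact ⟨(x, u), ⟨⟨hx, hu⟩, rfl⟩, rfl⟩

end OrderedMonoid

lemma DCC.isPWO {S : Set ℝ} (h : DCC S) : S.IsPWO :=
  (isWF_iff_no_descending_seq.2 fun f hf hS => h ⟨f, hS, hf⟩).isPWO

lemma AddSubmonoid.nonneg_of_mem_closure {S : Set ℝ} (hS : ∀ x ∈ S, 0 ≤ x) {x : ℝ}
    (hx : x ∈ AddSubmonoid.closure S) : 0 ≤ x :=
  AddSubmonoid.closure_induction hS le_rfl (fun _ _ _ _ => add_nonneg) hx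

lemma AddMonoidHom.map_mem_closure_image {A B : Type*} [AddMonoid A] [AddMonoid B] (φ : A →+ B)
    {S : Set A} {x : A} (hx : x ∈ AddSubmonoid.closure S) :
    φ x ∈ AddSubmonoid.closure (φ '' S) :=
  AddMonoidHom.map_mclosure φ S ▸ AddSubmonoid.mem_map_of_mem φ hx

lemma sum_natCast_mul_eq_sum_nsmul {ι : Type*} [Fintype ι] (n : ι → ℕ) (f : ι → ℝ → ℝ) :
    (fun t => ∑ i, (n i : ℝ) * f i t) = ∑ i, n i • f i := by
  funext t
  simp [Finset.sum_apply, nsmul_eq_mul]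

lemma sum_natCast_mul_mem_closure {ι : Type*} [Fintype ι] {F : Set (ℝ → ℝ)} (n : ι → ℕ)
    {f : ι → ℝ → ℝ} (hf : ∀ i, f i ∈ F) :
    (fun t => ∑ i, (n i : ℝ) * f i t) ∈ AddSubmonoid.closure F := by
  rw [sum_natCast_mul_eq_sum_nsmul]
  exact sum_mem fun i _ => nsmul_mem (AddSubmonoid.subset_closure (hf i)) _

section Linear

def linearFunctions : AddSubmonoid (ℝ → ℝ) where
  carrier := {f | IsLinearFun f}
  zero_mem' := ⟨0, 0, fun _ => by simp⟩
  add_mem' := by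
    rintro f g ⟨p, q, hf⟩ ⟨p', q', hg⟩
    exact ⟨p + p', q + q', fun t => by simp only [Pi.add_apply, hf, hg]; ring⟩

lemma IsLinearFun.of_mem_closure {F : Set (ℝ → ℝ)} (hF : ∀ f ∈ F, IsLinearFun f) {v : ℝ → ℝ}
    (hv : v ∈ AddSubmonoid.closure F) : IsLinearFun v :=
  AddSubmonoid.closure_le (S := linearFunctions).2 hF hv

lemma IsLinearFun.apply_le_of_apply_le {v : ℝ → ℝ} (hv : IsLinearFun v) {a b c : ℝ}
    (hac : a < c) (hc : v c ≤ v a) (hab : a ≤ b) : v b ≤ v a := by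
  obtain ⟨p, q, hv⟩ := hv
  simp only [hv] at hc ⊢
  nlinarith

lemma IsLinearFun.eq_of_apply_eq_s10 {f g : ℝ → ℝ} (hf : IsLinearFun f) (hg : IsLinearFun g)
    {a b : ℝ} (hab : a ≠ b) (ha : f a = g a) (hb : f b = g b) : f = g := by
  obtain ⟨p, q, hf⟩ := hf
  obtain ⟨p', q', hg⟩ := hg
  rw [hf, hg] at ha hb
  have hp : p = p' := mul_right_cancel₀ (sub_ne_zero.2 hab) (by linarith)
  have hq : q = q' := by subst hp; linarith
  funext t
  rw [hf, hg, hp, hq]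

end Linear

section Mix

noncomputable def mixWithOne (m : ℕ) (x : ℝ) : ℝ := ((m : ℝ) - 1 + x) / m

variable {m m' : ℕ} {x x' : ℝ}

lemma mixWithOne_eq (hm : 1 ≤ m) (x : ℝ) : mixWithOne m x = 1 - (1 - x) / m := by
  have : (m : ℝ) ≠ 0 := by positivity
  unfold mixWithOne
  field_simp
  ring

lemma mixWithOne_nonneg (hm : 1 ≤ m) (hx : 0 ≤ x) : 0 ≤ mixWithOne m x := by
  have : (1 : ℝ) ≤ m := by exact_mod_cast hm
  exact div_nonneg (by linarith) (by positivity)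

lemma mixWithOne_mono_right (hm : 1 ≤ m) : Monotone (mixWithOne m) := fun x x' h => by
  rw [mixWithOne_eq hm, mixWithOne_eq hm]
  have := div_le_div_of_nonneg_right (sub_le_sub_left h 1) (Nat.cast_nonneg (α := ℝ) m)
  linarith

lemma mixWithOne_le_mixWithOne_left (hm : 1 ≤ m) (hmm' : m ≤ m') (hx : x ≤ 1) :
    mixWithOne m x ≤ mixWithOne m' x := by
  rw [mixWithOne_eq hm, mixWithOne_eq (hm.trans hmm')]
  have := div_le_div_of_nonneg_left (sub_nonneg.2 hx) (by positivity : (0 : ℝ) < m)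
    (Nat.cast_le.2 hmm')
  linarith

lemma mixWithOne_lt_mixWithOne_left (hm : 1 ≤ m) (hmm' : m < m') (hx : x < 1) :
    mixWithOne m x < mixWithOne m' x := by
  rw [mixWithOne_eq hm, mixWithOne_eq (hm.trans hmm'.le)]
  have := div_lt_div_of_pos_left (sub_pos.2 hx) (by positivity : (0 : ℝ) < m)
    (Nat.cast_lt.2 hmm')
  linarith

lemma mixWithOne_le_one (hm : 1 ≤ m) (hx : x ≤ 1) : mixWithOne m x ≤ 1 := by
  rw [mixWithOne_eq hm]
  have := div_nonneg (sub_nonneg.2 hx) (Nat.cast_nonneg (α := ℝ) m)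
  linarith

lemma eq_one_of_mixWithOne_eq_one (hm : 1 ≤ m) (h : mixWithOne m x = 1) : x = 1 := by
  rw [mixWithOne_eq hm, sub_eq_self, div_eq_zero_iff] at h
  have : (m : ℝ) ≠ 0 := by positivity
  exact (sub_eq_zero.1 (h.resolve_right this)).symm

noncomputable def lexMix (q : ℕ × ℝ × ℝ) : ℝ ×ₗ ℝ := toLex (mixWithOne q.1 q.2.1, mixWithOne q.1 q.2.2)

def mixDomain : Set (ℕ × ℝ × ℝ) := {q | 1 ≤ q.1 ∧ toLex q.2 ≤ toLex (1, 1)}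

lemma lexMix_monotoneOn : MonotoneOn lexMix mixDomain := by
  rintro ⟨m, x, y⟩ ⟨hm, hxy⟩ ⟨m', x', y'⟩ - ⟨hmm', hxx', hyy'⟩
  obtain ⟨hx1, hy1⟩ := Prod.Lex.toLex_le_toLex'.1 hxy
  dsimp only at hm hmm' hxx' hyy' hx1 hy1
  refine Prod.Lex.toLex_le_toLex'.2 ⟨(mixWithOne_le_mixWithOne_left hm hmm' hx1).trans
    (mixWithOne_mono_right (hm.trans hmm') hxx'), fun heq => ?_⟩
  dsimp only at heq ⊢
  rcases hmm'.eq_or_lt with rfl | hlt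
  · exact mixWithOne_mono_right hm hyy'
  · have hx : x = 1 := by
      by_contra hx
      exact heq.not_lt ((mixWithOne_lt_mixWithOne_left hm hlt (lt_of_le_of_ne hx1 hx)).trans_le
        (mixWithOne_mono_right (hm.trans hlt.le) hxx'))
    exact (mixWithOne_le_mixWithOne_left hm hlt.le (hy1 hx)).trans
      (mixWithOne_mono_right (hm.trans hlt.le) hyy')

lemma lexMix_nonneg {q : ℕ × ℝ × ℝ} (hq : q ∈ mixDomain) (hx : 0 ≤ q.2.1) (hy : 0 ≤ q.2.2) :
    0 ≤ lexMix q :=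
  Prod.Lex.toLex_mono (a := ((0 : ℝ), (0 : ℝ)))
    ⟨mixWithOne_nonneg hq.1 hx, mixWithOne_nonneg hq.1 hy⟩

lemma lexMix_le {q : ℕ × ℝ × ℝ} (hq : q ∈ mixDomain) : lexMix q ≤ toLex (1, 1) := by
  obtain ⟨hx1, hy1⟩ := Prod.Lex.toLex_le_toLex'.1 hq.2
  exact Prod.Lex.toLex_le_toLex'.2 ⟨mixWithOne_le_one hq.1 hx1,
    fun h => mixWithOne_le_one hq.1 (hy1 (eq_one_of_mixWithOne_eq_one hq.1 h))⟩

end Mix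

def lexEval (a b : ℝ) : (ℝ → ℝ) →+ ℝ ×ₗ ℝ where
  toFun f := toLex (f a, f b)
  map_zero' := rfl
  map_add' _ _ := rfl

lemma lexEval_apply (a b : ℝ) (f : ℝ → ℝ) : lexEval a b f = toLex (f a, f b) := rfl

def endpointValues (F : Set (ℝ → ℝ)) (a b : ℝ) : Set ℝ :=
  ((fun f : ℝ → ℝ => f a) '' F) ∪ ((fun f : ℝ → ℝ => f b) '' F)

section Endpoints

variable {F : Set (ℝ → ℝ)} {a b c : ℝ} {v w : ℝ → ℝ}

lemma endpointValues_nonneg (hab : a ≤ b) (hnonneg : ∀ f ∈ F, ∀ t ∈ Icc a b, 0 ≤ f t) :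
    ∀ x ∈ endpointValues F a b, 0 ≤ x := by
  rintro _ (⟨f, hf, rfl⟩ | ⟨f, hf, rfl⟩)
  · exact hnonneg f hf a ⟨le_rfl, hab⟩
  · exact hnonneg f hf b ⟨hab, le_rfl⟩

lemma apply_mem_closure_endpointValues (hv : v ∈ AddSubmonoid.closure F) :
    v a ∈ AddSubmonoid.closure (endpointValues F a b) ∧
      v b ∈ AddSubmonoid.closure (endpointValues F a b) :=
  ⟨AddSubmonoid.closure_mono (by rintro _ ⟨f, hf, rfl⟩; exact Or.inl ⟨f, hf, rfl⟩)
      ((Pi.evalAddMonoidHom (fun _ : ℝ => ℝ) a).map_mem_closure_image hv),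
    AddSubmonoid.closure_mono (by rintro _ ⟨f, hf, rfl⟩; exact Or.inr ⟨f, hf, rfl⟩)
      ((Pi.evalAddMonoidHom (fun _ : ℝ => ℝ) b).map_mem_closure_image hv)⟩

lemma isPWO_lexEval_image (hS : (endpointValues F a b).IsPWO) : (lexEval a b '' F).IsPWO := by
  refine ((hS.prod hS).image_of_monotone Prod.Lex.toLex_mono).mono ?_
  rintro _ ⟨f, hf, rfl⟩
  exact ⟨(f a, f b), ⟨Or.inl ⟨f, hf, rfl⟩, Or.inr ⟨f, hf, rfl⟩⟩, rfl⟩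

lemma lexEval_nonneg (hab : a ≤ b) (hnonneg : ∀ t ∈ Icc a b, 0 ≤ v t) : 0 ≤ lexEval a b v :=
  Prod.Lex.toLex_mono (a := ((0 : ℝ), (0 : ℝ))) ⟨hnonneg a ⟨le_rfl, hab⟩, hnonneg b ⟨hab, le_rfl⟩⟩

lemma lexEval_injOn (hab : a ≠ b) (hlin : ∀ f ∈ F, IsLinearFun f) : InjOn (lexEval a b) F :=
  fun f hf g hg h => by
    obtain ⟨ha, hb⟩ := Prod.mk.inj (toLex.injective h)
    exact (hlin f hf).eq_of_apply_eq_s10 (hlin g hg) hab ha hb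

lemma FPlus_le_one (hv : v ∈ FPlus F a c) : ∀ t ∈ Icc a c, v t ≤ 1 := by
  rcases hv with rfl | ⟨-, hv⟩
  · intro t _
    exact zero_le_one
  · exact hv

lemma mem_closure_of_mem_FPlus (hv : v ∈ FPlus F a c) : v ∈ AddSubmonoid.closure F := by
  rcases hv with rfl | ⟨⟨k, -, n, f, -, hf, rfl⟩, -⟩
  · exact zero_mem _
  · exact sum_natCast_mul_mem_closure n hf

lemma exists_lexMix_of_mem_calD (hlin : ∀ f ∈ F, IsLinearFun f) (hw : w ∈ calD F a b) :
    ∃ m v, (m, v a, v b) ∈ mixDomain ∧ v ∈ AddSubmonoid.closure F ∧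
      lexEval a b w = lexMix (m, v a, v b) := by
  obtain ⟨c, ⟨hac, hcb⟩, m, hm, v, hv, rfl, -⟩ := mem_iUnion₂.1 hw
  have hv1 := FPlus_le_one hv
  have hvF := mem_closure_of_mem_FPlus hv
  refine ⟨m, v, ⟨hm, Prod.Lex.toLex_le_toLex'.2 ⟨hv1 a ⟨le_rfl, hac.le⟩, fun h => ?_⟩⟩, hvF, rfl⟩
  dsimp only at h ⊢
  rw [← h]
  exact (IsLinearFun.of_mem_closure hlin hvF).apply_le_of_apply_le hac
    (h ▸ hv1 c ⟨hac.le, le_rfl⟩) (hac.le.trans hcb)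

lemma isPWO_lexEval_image_calD (hlin : ∀ f ∈ F, IsLinearFun f)
    (hS : (endpointValues F a b).IsPWO) (hS0 : ∀ x ∈ endpointValues F a b, 0 ≤ x) :
    (lexEval a b '' calD F a b).IsPWO := by
  set A := (AddSubmonoid.closure (endpointValues F a b) : Set ℝ)
  have hdom : (mixDomain ∩ univ ×ˢ A ×ˢ A).IsPWO :=
    ((isPWO_univ_iff.2 inferInstance).prod ((hS.addSubmonoid_closure hS0).prod
      (hS.addSubmonoid_closure hS0))).mono inter_subset_right
  refine (hdom.image_of_monotoneOn (lexMix_monotoneOn.mono inter_subset_left)).mono ?_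
  rintro _ ⟨w, hw, rfl⟩
  obtain ⟨m, v, hmv, hv, heq⟩ := exists_lexMix_of_mem_calD hlin hw
  exact ⟨(m, v a, v b), ⟨hmv, trivial, apply_mem_closure_endpointValues hv⟩, heq.symm⟩

lemma lexEval_nonneg_of_mem_calD (hlin : ∀ f ∈ F, IsLinearFun f)
    (hS0 : ∀ x ∈ endpointValues F a b, 0 ≤ x) (hw : w ∈ calD F a b) : 0 ≤ lexEval a b w := by
  obtain ⟨m, v, hmv, hv, heq⟩ := exists_lexMix_of_mem_calD hlin hw
  obtain ⟨ha, hb⟩ := apply_mem_closure_endpointValues (b := b) hv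
  exact heq ▸ lexMix_nonneg hmv (AddSubmonoid.nonneg_of_mem_closure hS0 ha)
    (AddSubmonoid.nonneg_of_mem_closure hS0 hb)

lemma lexEval_le_of_mem_calD (hlin : ∀ f ∈ F, IsLinearFun f) (hw : w ∈ calD F a b) :
    lexEval a b w ≤ toLex (1, 1) := by
  obtain ⟨m, v, hmv, -, heq⟩ := exists_lexMix_of_mem_calD hlin hw
  exact heq ▸ lexMix_le hmv

lemma mem_calD_of_mem_Wset {K : ℝ} (hw : w ∈ Wset F a b K) : w ∈ calD F a b := by
  obtain ⟨s, -, r, ws, -, hD, -, -, j, rfl⟩ := hw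
  exact hD j

lemma exists_lexEval_add_eq_of_mem_Wset (hab : a ≤ b) {K : ℝ} (hw : w ∈ Wset F a b K) :
    ∃ u ∈ AddSubmonoid.closure (lexEval a b '' calD F a b), lexEval a b w + u = toLex (K, K) := by
  classical
  obtain ⟨s, -, r, ws, hr, hD, -, hrel, j, rfl⟩ := hw
  obtain ⟨u, hu, hsum⟩ := exists_add_eq_sum_nsmul r (fun i => lexEval a b (ws i)) (hr j)
  refine ⟨u, AddSubmonoid.closure_mono (range_subset_iff.2 fun i => mem_image_of_mem _ (hD i)) hu,
    hsum.trans ?_⟩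
  calc ∑ i, r i • lexEval a b (ws i) = lexEval a b (∑ i, r i • ws i) := by
        simp only [map_sum, map_nsmul]
    _ = toLex (K, K) := by
        rw [lexEval_apply, ← sum_natCast_mul_eq_sum_nsmul]
        exact congrArg toLex (Prod.ext (hrel a ⟨le_rfl, hab⟩) (hrel b ⟨hab, le_rfl⟩))

end Endpoints

lemma exists_lexEval_add_eq_one {F : Set (ℝ → ℝ)} {a b K : ℝ} {f : ℝ → ℝ} {m n k : ℕ}
    {nj : Fin k → ℕ} {fj : Fin k → ℝ → ℝ} (hm : 0 < m) (hn : 0 < n) (hf : f ∈ F)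
    (hfj : ∀ i, fj i ∈ F)
    (hw : (fun t => ((m : ℝ) - 1 + (n : ℝ) * f t + ∑ i, (nj i : ℝ) * fj i t) / m) ∈ Wset F a b K) :
    ∃ u ∈ AddSubmonoid.closure
        (lexEval a b '' F ∪ (toLex (1, 1) - ·) '' (lexEval a b '' Wset F a b K)),
      lexEval a b f + u = toLex (1, 1) := by
  set w := fun t => ((m : ℝ) - 1 + (n : ℝ) * f t + ∑ i, (nj i : ℝ) * fj i t) / m with hwdef
  set g := fun t => ∑ i, (nj i : ℝ) * fj i t
  obtain ⟨n', rfl⟩ := Nat.exists_eq_add_one_of_ne_zero hn.ne'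
  have hfun : (n' + 1) • f + g + m • (1 - w) = 1 := by
    funext t
    have : (m : ℝ) ≠ 0 := by positivity
    simp only [Pi.add_apply, Pi.smul_apply, Pi.sub_apply, Pi.one_apply]
    simp only [g, hwdef, nsmul_eq_mul]
    field_simp
    push_cast
    ring
  have hg : lexEval a b g ∈ AddSubmonoid.closure (lexEval a b '' F) :=
    (lexEval a b).map_mem_closure_image (sum_natCast_mul_mem_closure nj hfj)
  refine ⟨n' • lexEval a b f + lexEval a b g + m • (toLex (1, 1) - lexEval a b w), ?_, ?_⟩
  · refine add_mem (add_mem (nsmul_mem (AddSubmonoid.subset_closure ?_) _)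
      (AddSubmonoid.closure_mono subset_union_left hg)) (nsmul_mem (AddSubmonoid.subset_closure ?_) _)
    · exact Or.inl (mem_image_of_mem _ hf)
    · exact Or.inr (mem_image_of_mem _ (mem_image_of_mem _ hw))
  · calc _ = lexEval a b ((n' + 1) • f + g + m • (1 - w)) := by
          simp only [map_add, map_nsmul, map_sub, succ_nsmul', add_assoc]
          rfl
      _ = toLex (1, 1) := by rw [hfun]; rfl

theorem finiteness_of_Dinv_general (a b : ℝ) (hab : a < b)
    (F : Set (ℝ → ℝ))
    (hlin : ∀ f ∈ F, IsLinearFun f)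
    (hnonneg : ∀ f ∈ F, ∀ t ∈ Set.Icc a b, 0 ≤ f t)
    (hDCC : DCC (((fun f : ℝ → ℝ => f a) '' F) ∪ ((fun f : ℝ → ℝ => f b) '' F)))
    (K : ℝ) :
    Set.Finite { f : ℝ → ℝ | f ∈ F ∧ ∃ m n : ℕ, 0 < m ∧ 0 < n ∧
      ∃ k : ℕ, ∃ nj : Fin k → ℕ, ∃ fj : Fin k → ℝ → ℝ,
        (∀ i, 0 < nj i) ∧ (∀ i, fj i ∈ F) ∧
        (fun t => ((m : ℝ) - 1 + (n : ℝ) * f t + ∑ i, (nj i : ℝ) * fj i t) / m)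
          ∈ Wset F a b K } := by
  have hS : (endpointValues F a b).IsPWO := hDCC.isPWO
  have hS0 := endpointValues_nonneg hab.le hnonneg
  set T := lexEval a b '' calD F a b
  have hT : T.IsPWO := isPWO_lexEval_image_calD hlin hS hS0
  have hT0 : ∀ p ∈ T, 0 ≤ p := by
    rintro _ ⟨w, hw, rfl⟩
    exact lexEval_nonneg_of_mem_calD hlin hS0 hw
  have hP : (lexEval a b '' Wset F a b K).Finite := by
    refine (hT.finite_setOf_add_eq (hT.addSubmonoid_closure hT0) (toLex (K, K))).subset ?_
    rintro _ ⟨w, hw, rfl⟩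
    exact ⟨mem_image_of_mem _ (mem_calD_of_mem_Wset hw), exists_lexEval_add_eq_of_mem_Wset hab.le hw⟩
  set T₂ := lexEval a b '' F ∪ (toLex (1, 1) - ·) '' (lexEval a b '' Wset F a b K)
  have hT₂ : T₂.IsPWO := (isPWO_lexEval_image hS).union (hP.image _).isPWO
  have hT₂0 : ∀ p ∈ T₂, 0 ≤ p := by
    rintro _ (⟨f, hf, rfl⟩ | ⟨_, ⟨w, hw, rfl⟩, rfl⟩)
    · exact lexEval_nonneg hab.le (hnonneg f hf)
    · exact sub_nonneg.2 (lexEval_le_of_mem_calD hlin (mem_calD_of_mem_Wset hw))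
  refine Finite.of_finite_image ((hT₂.finite_setOf_add_eq (hT₂.addSubmonoid_closure hT₂0)
    (toLex (1, 1))).subset ?_) ((lexEval_injOn hab.ne hlin).mono fun f hf => hf.1)
  rintro _ ⟨f, ⟨hf, m, n, hm, hn, k, nj, fj, -, hfj, hw⟩, rfl⟩
  exact ⟨Or.inl (mem_image_of_mem _ hf), exists_lexEval_add_eq_one hm hn hf hfj hw⟩

theorem finiteness_of_Dinv (a b : ℝ) (hab : a < b)
    (F : Set (ℝ → ℝ))
    (hlin : ∀ f ∈ F, IsLinearFun f)
    (hnonneg : ∀ f ∈ F, ∀ t ∈ Set.Icc a b, 0 ≤ f t)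
    (hone : (fun _ => (1 : ℝ)) ∈ F)
    (hDCC : DCC (((fun f : ℝ → ℝ => f a) '' F) ∪ ((fun f : ℝ → ℝ => f b) '' F)))
    (K : ℝ) :
    Set.Finite { f : ℝ → ℝ | f ∈ F ∧ ∃ m n : ℕ, 0 < m ∧ 0 < n ∧
      ∃ k : ℕ, ∃ nj : Fin k → ℕ, ∃ fj : Fin k → ℝ → ℝ,
        (∀ i, 0 < nj i) ∧ (∀ i, fj i ∈ F) ∧
        (fun t => ((m : ℝ) - 1 + (n : ℝ) * f t + ∑ i, (nj i : ℝ) * fj i t) / m)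
          ∈ Wset F a b K } :=
  finiteness_of_Dinv_general a b hab F hlin hnonneg hDCC K
end

section
/- With notation as in the context, assume the set S := {f(a) : f ∈ 𝓕} ∪ {f(b) : f ∈ 𝓕} satisfies the descending chain condition and that S \ {0} is nonempty, and let τ be the least element of S \ {0} (which exists by the DCC and satisfies τ > 0). Then every w ∈ 𝒟(𝓕, [a,b]) that is not identically zero satisfies w((a+b)/2) ≥ min(1/2, τ/2). -/
theorem calD_midpoint_lower_bound (a b : ℝ) (hab : a < b)
    (F : Set (ℝ → ℝ))
    (hlin : ∀ f ∈ F, IsLinearFun f)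
    (hnonneg : ∀ f ∈ F, ∀ t ∈ Set.Icc a b, 0 ≤ f t)
    (hone : (fun _ => (1 : ℝ)) ∈ F)
    (hDCC : DCC (((fun f : ℝ → ℝ => f a) '' F) ∪ ((fun f : ℝ → ℝ => f b) '' F)))
    (hne : ((((fun f : ℝ → ℝ => f a) '' F) ∪ ((fun f : ℝ → ℝ => f b) '' F)) \ {0}).Nonempty)
    (τ : ℝ)
    (hτ : IsLeast ((((fun f : ℝ → ℝ => f a) '' F) ∪ ((fun f : ℝ → ℝ => f b) '' F)) \ {0}) τ) :
    ∀ w ∈ calD F a b, w ≠ 0 → min (1 / 2) (τ / 2) ≤ w ((a + b) / 2) := by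
  intro w hw hw0
  simp only [calD, Set.mem_iUnion, Set.mem_Ioc, DOp, Set.mem_setOf_eq] at hw
  obtain ⟨c, ⟨hac, hcb⟩, m, hm, v, hv, hweq, -⟩ := hw
  have hmid : (a + b) / 2 ∈ Set.Icc a b := ⟨by linarith, by linarith⟩
  have hmR : (0:ℝ) < m := by exact_mod_cast hm
  -- midpoint of a linear function
  have hlinmid : ∀ f ∈ F, f ((a + b) / 2) = (f a + f b) / 2 := by
    intro f hf
    obtain ⟨p, q, hpq⟩ := hlin f hf
    rw [hpq, hpq, hpq]; ring
  have hvmid : 0 ≤ v ((a + b) / 2) ∧ (v ≠ 0 → τ / 2 ≤ v ((a + b) / 2)) := by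
    rcases hv with hv0 | ⟨⟨k, hk, n, f, hn, hfF, hveq⟩, -⟩
    · have : v = 0 := hv0
      subst this
      exact ⟨le_refl _, fun h => absurd rfl h⟩
    · have hterm : ∀ i : Fin k, 0 ≤ (n i : ℝ) * f i ((a + b) / 2) := by
        intro i
        exact mul_nonneg (by positivity) (hnonneg _ (hfF i) _ hmid)
      have h0 : 0 ≤ v ((a + b) / 2) := by
        rw [hveq]
        exact Finset.sum_nonneg fun i _ => hterm i
      refine ⟨h0, fun hvne => ?_⟩
      by_cases hall : ∀ i, f i ((a + b) / 2) = 0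
      · exfalso
        apply hvne
        funext t
        have hfz : ∀ i, f i t = 0 := by
          intro i
          obtain ⟨p, q, hpq⟩ := hlin _ (hfF i)
          have ha0 : 0 ≤ f i a := hnonneg _ (hfF i) a ⟨le_refl _, le_of_lt hab⟩
          have hb0 : 0 ≤ f i b := hnonneg _ (hfF i) b ⟨le_of_lt hab, le_refl _⟩
          have hmideq : f i ((a + b) / 2) = (f i a + f i b) / 2 := hlinmid _ (hfF i)
          have hsum : f i a + f i b = 0 := by
            have := hall i
            rw [hmideq] at this
            linarith
          have hfa : f i a = 0 := by linarith
          have hfb : f i b = 0 := by linarith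
          rw [hpq] at hfa hfb ⊢
          have hp : p * (a - b) = 0 := by ring_nf; ring_nf at hfa hfb; linarith
          have hp0 : p = 0 := by
            rcases mul_eq_zero.mp hp with h | h
            · exact h
            · exact absurd (by linarith : a = b) (ne_of_lt hab)
          rw [hp0] at hfa ⊢
          linarith
        rw [hveq]
        simp [hfz]
      · push_neg at hall
        obtain ⟨j, hj⟩ := hall
        have ha0 : 0 ≤ f j a := hnonneg _ (hfF j) a ⟨le_refl _, le_of_lt hab⟩
        have hb0 : 0 ≤ f j b := hnonneg _ (hfF j) b ⟨le_of_lt hab, le_refl _⟩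
        have hmideq : f j ((a + b) / 2) = (f j a + f j b) / 2 := hlinmid _ (hfF j)
        have hjlow : τ / 2 ≤ f j ((a + b) / 2) := by
          by_cases hfa : f j a = 0
          · have hfb : f j b ≠ 0 := by
              intro hfb
              apply hj
              rw [hmideq, hfa, hfb]; norm_num
            have hτb : τ ≤ f j b := hτ.2 ⟨Or.inr ⟨f j, hfF j, rfl⟩, hfb⟩
            rw [hmideq, hfa]; linarith
          · have hτa : τ ≤ f j a := hτ.2 ⟨Or.inl ⟨f j, hfF j, rfl⟩, hfa⟩
            rw [hmideq]; linarith
        have hnj : (1:ℝ) ≤ (n j : ℝ) := by exact_mod_cast hn j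
        have hτpos : 0 < τ := by
          obtain ⟨hτS, hτ0⟩ := hτ.1
          have hτ0' : τ ≠ 0 := hτ0
          have hτnn : 0 ≤ τ := by
            rcases hτS with ⟨g, hg, rfl⟩ | ⟨g, hg, rfl⟩
            · exact hnonneg _ hg a ⟨le_refl _, le_of_lt hab⟩
            · exact hnonneg _ hg b ⟨le_of_lt hab, le_refl _⟩
          exact lt_of_le_of_ne hτnn (Ne.symm hτ0')
        have hsingle : (n j : ℝ) * f j ((a + b) / 2) ≤ v ((a + b) / 2) := by
          rw [hveq]
          exact Finset.single_le_sum (fun i _ => hterm i) (Finset.mem_univ j)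
        nlinarith
  rcases Nat.lt_or_ge m 2 with hm2 | hm2
  · -- m = 1
    have hm1 : m = 1 := by omega
    subst hm1
    have hvne : v ≠ 0 := by
      intro hv0
      apply hw0
      funext t
      rw [hweq, hv0]
      norm_num
    have := hvmid.2 hvne
    rw [hweq]
    simp only [Nat.cast_one]
    calc min (1/2) (τ/2) ≤ τ/2 := min_le_right _ _
      _ ≤ v ((a+b)/2) := this
      _ = (1 - 1 + v ((a+b)/2)) / 1 := by ring
  · -- m ≥ 2
    have hm2R : (2:ℝ) ≤ m := by exact_mod_cast hm2
    rw [hweq]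
    have h0 := hvmid.1
    calc min (1/2) (τ/2) ≤ 1/2 := min_le_left _ _
      _ ≤ ((m:ℝ) - 1 + v ((a+b)/2)) / m := by
          rw [le_div_iff₀ hmR]; linarith
end

section
/- Take a = 0, b = 1, and let 𝓕 be the set of linear functions consisting of the constant function 1 together with the functions t ↦ n·t for every n ∈ ℤ_{>0}. Then for every m ∈ ℤ_{>0} the linear function w_m(t) = (m − 1 + (m+2)·t)/m belongs to 𝒟(𝓕, [0,1]) and satisfies w_m(1) = (2m+1)/m. Consequently, the set 𝒟(𝓕, [0,1])|₁ := { w(1) : w ∈ 𝒟(𝓕, [0,1]) } contains the infinite strictly decreasing sequence ((2m+1)/m)_{m∈ℤ_{>0}} and therefore does not satisfy the descending chain condition. -/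
/-- The counterexample family: `𝓕 = {1} ∪ {t ↦ n·t : n ∈ ℤ_{>0}}` on `[0,1]`. -/
def Fex : Set (ℝ → ℝ) :=
  {fun _ => (1 : ℝ)} ∪ { f | ∃ n : ℕ, 0 < n ∧ f = fun t => (n : ℝ) * t }

/-
For `m > 0` take `c = 1/(m+2)` and `v(t) = (m+2)·t`, a single member of `𝓕`; then `v ≤ 1` on
`[0,c]`, so `w_m = (m - 1 + v)/m ∈ D(𝓕,[0,c])`. Its value at `1` is `(2m+1)/m = 2 + 1/m`,
which strictly decreases in `m`.
-/

section Membership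

variable {F : Set (ℝ → ℝ)} {a c : ℝ}

theorem le_one_of_mem_FPlus {v : ℝ → ℝ} (hv : v ∈ FPlus F a c) :
    ∀ t ∈ Set.Icc a c, v t ≤ 1 := by
  rcases hv with rfl | ⟨-, hle⟩
  · intro t _
    simp
  · exact hle

theorem mem_FPlus_of_mem {f : ℝ → ℝ} (hf : f ∈ F) (hle : ∀ t ∈ Set.Icc a c, f t ≤ 1) :
    f ∈ FPlus F a c := by
  refine Or.inr ⟨⟨1, one_pos, fun _ => 1, fun _ => f, fun _ => one_pos, fun _ => hf, ?_⟩, hle⟩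
  simp

theorem mem_DOp_of_mem_FPlus {m : ℕ} (hm : 0 < m) {v : ℝ → ℝ} (hv : v ∈ FPlus F a c) :
    (fun t => ((m : ℝ) - 1 + v t) / m) ∈ DOp F a c := by
  refine ⟨m, hm, v, hv, rfl, fun t ht => ?_⟩
  have hm' : (0 : ℝ) < m := by exact_mod_cast hm
  rw [div_le_one hm']
  linarith [le_one_of_mem_FPlus hv t ht]

theorem DOp_subset_calD {b : ℝ} (hc : c ∈ Set.Ioc a b) : DOp F a c ⊆ calD F a b :=
  Set.subset_biUnion_of_mem (u := fun c => DOp F a c) hc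

end Membership

theorem mul_mem_Fex {n : ℕ} (hn : 0 < n) : (fun t => (n : ℝ) * t) ∈ Fex :=
  Or.inr ⟨n, hn, rfl⟩

theorem mul_le_one_of_mem_Icc_zero_inv {p t : ℝ} (hp : 0 < p) (ht : t ∈ Set.Icc 0 p⁻¹) :
    p * t ≤ 1 :=
  calc p * t ≤ p * p⁻¹ := mul_le_mul_of_nonneg_left ht.2 hp.le
    _ = 1 := mul_inv_cancel₀ hp.ne'

theorem witness_mem_calD_Fex {m : ℕ} (hm : 0 < m) :
    (fun t => ((m : ℝ) - 1 + ((m : ℝ) + 2) * t) / m) ∈ calD Fex 0 1 := by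
  have hp : (0 : ℝ) < (m : ℝ) + 2 := by positivity
  have hc : ((m : ℝ) + 2)⁻¹ ∈ Set.Ioc 0 1 :=
    ⟨inv_pos.mpr hp, inv_le_one_of_one_le₀ (by linarith)⟩
  have hF : (fun t => ((m : ℝ) + 2) * t) ∈ Fex := by
    exact_mod_cast mul_mem_Fex (n := m + 2) (by omega)
  exact DOp_subset_calD hc <| mem_DOp_of_mem_FPlus hm <|
    mem_FPlus_of_mem hF fun t ht => mul_le_one_of_mem_Icc_zero_inv hp ht

theorem two_mul_add_one_div_strictAnti :
    StrictAnti (fun m : ℕ => (2 * ((m : ℝ) + 1) + 1) / ((m : ℝ) + 1)) := by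
  have hsplit : ∀ m : ℕ, (2 * ((m : ℝ) + 1) + 1) / ((m : ℝ) + 1) = 2 + ((m : ℝ) + 1)⁻¹ := by
    intro m
    field_simp
  intro i j hij
  simp only [hsplit, add_lt_add_iff_left]
  gcongr

theorem not_DCC_of_strictAnti {S : Set ℝ} {f : ℕ → ℝ} (hmem : ∀ i, f i ∈ S)
    (hf : StrictAnti f) : ¬ DCC S :=
  fun hDCC => hDCC ⟨f, hmem, hf⟩

theorem calD_not_DCC_at_one :
    (∀ m : ℕ, 0 < m →
      (fun t => ((m : ℝ) - 1 + ((m : ℝ) + 2) * t) / m) ∈ calD Fex 0 1 ∧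
      ((m : ℝ) - 1 + ((m : ℝ) + 2) * 1) / m = (2 * (m : ℝ) + 1) / m) ∧
    (∀ m : ℕ, 0 < m →
      (2 * (m : ℝ) + 1) / m ∈ { x : ℝ | ∃ w ∈ calD Fex 0 1, x = w 1 }) ∧
    StrictAnti (fun m : ℕ => (2 * ((m : ℝ) + 1) + 1) / ((m : ℝ) + 1)) ∧
    ¬ DCC { x : ℝ | ∃ w ∈ calD Fex 0 1, x = w 1 } := by
  have hvalue : ∀ m : ℕ, ((m : ℝ) - 1 + ((m : ℝ) + 2) * 1) / m = (2 * (m : ℝ) + 1) / m :=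
    fun m => by ring
  have hmem : ∀ m : ℕ, 0 < m →
      (2 * (m : ℝ) + 1) / m ∈ { x : ℝ | ∃ w ∈ calD Fex 0 1, x = w 1 } :=
    fun m hm => ⟨_, witness_mem_calD_Fex hm, (hvalue m).symm⟩
  refine ⟨fun m hm => ⟨witness_mem_calD_Fex hm, hvalue m⟩, hmem,
    two_mul_add_one_div_strictAnti, not_DCC_of_strictAnti (fun i => ?_)
    two_mul_add_one_div_strictAnti⟩
  exact_mod_cast hmem (i + 1) i.succ_pos
end
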